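/- arXiv:2407.18090 — 5 statements merged into one kernel-verified Lean document; each statement's English description precedes it below -/
import Mathlib

section
/- Let A be a nice, safe minimal and safe centralised history-deterministic coBüchi automaton recognising L ⊆ Σ^ω. If R is a recurrent residual of L, then the localisation A|_R is nice, safe minimal and safe centralised. If R is a transient residual of L (i.e., Σ_R = ∅), then exactly one state of A recognises R. -/
/-- A transition of an automaton: source state, input letter, output colour,
destination state.  (Acceptance is transition-based.) -/
structure AutTrans (Q A Γ : Type) where
  src : Q
  lab : A
  out : Γ
  dst : Q

/-- An (ω-)automaton with finite state set `Q`, input alphabet `A`,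
output alphabet `Γ`, initial state `init`, transition set `delta` and
acceptance condition `acc ⊆ Γ^ω`. -/
structure Automaton (A Γ : Type) where
  Q : Type
  fin : Fintype Q
  init : Q
  delta : Set (AutTrans Q A Γ)
  acc : Set (ℕ → Γ)

/-- The generalised Büchi condition over the colour set `C`
(output alphabet `𝒫(C)`): every colour appears infinitely often. -/
def genBuchi (C : Type) : Set (ℕ → Set C) :=
  {f | ∀ c : C, ∀ n : ℕ, ∃ m : ℕ, n ≤ m ∧ c ∈ f m}

/-- The generalised coBüchi condition over the colour set `C`:
some colour appears only finitely often. -/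
def genCoBuchi (C : Type) : Set (ℕ → Set C) :=
  {f | ∃ c : C, ∃ n : ℕ, ∀ m : ℕ, n ≤ m → c ∉ f m}

namespace Automaton

variable {A Γ : Type}

/-- Number of states. -/
def size (M : Automaton A Γ) : ℕ := @Fintype.card M.Q M.fin

/-- `ρ` is a run of `M` on the word `w`, starting in the state `q`. -/
def IsRunFrom (M : Automaton A Γ) (q : M.Q) (w : ℕ → A)
    (ρ : ℕ → AutTrans M.Q A Γ) : Prop :=
  (ρ 0).src = q ∧ ∀ n : ℕ, ρ n ∈ M.delta ∧ (ρ n).lab = w n ∧ (ρ n).dst = (ρ (n + 1)).src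

/-- The language of `M` with initial state `q`. -/
def LangFrom (M : Automaton A Γ) (q : M.Q) : Set (ℕ → A) :=
  {w | ∃ ρ : ℕ → AutTrans M.Q A Γ, M.IsRunFrom q w ρ ∧ (fun n => (ρ n).out) ∈ M.acc}

/-- The language of `M`. -/
def Lang (M : Automaton A Γ) : Set (ℕ → A) := M.LangFrom M.init

/-- For every state and letter there is at most one outgoing transition. -/
def Deterministic (M : Automaton A Γ) : Prop :=
  ∀ t ∈ M.delta, ∀ t' ∈ M.delta, t.src = t'.src → t.lab = t'.lab → t = t'

/-- For every state and letter there is at least one outgoing transition. -/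
def Complete (M : Automaton A Γ) : Prop :=
  ∀ (p : M.Q) (a : A), ∃ t ∈ M.delta, t.src = p ∧ t.lab = a

/-- The infinite sequence of transitions chosen by a resolver `r` on the word `w`
(`r` is applied to all nonempty finite prefixes of `w`). -/
def resRun (M : Automaton A Γ) (r : List A → AutTrans M.Q A Γ) (w : ℕ → A) :
    ℕ → AutTrans M.Q A Γ :=
  fun n => r (List.ofFn fun i : Fin (n + 1) => w i)

/-- `r` is a resolver for `M`: on every word it induces a run,
which is accepting whenever the word is in the language of `M`. -/
def IsResolver (M : Automaton A Γ) (r : List A → AutTrans M.Q A Γ) : Prop :=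
  ∀ w : ℕ → A, M.IsRunFrom M.init w (M.resRun r w) ∧
    (w ∈ M.Lang → (fun n => (M.resRun r w n).out) ∈ M.acc)

/-- History-determinism: existence of a resolver. -/
def HistoryDeterministic (M : Automaton A Γ) : Prop := ∃ r, M.IsResolver r

/-- `M` admits a resolver such that every state occurs on some accepting run
induced by the resolver. -/
def ResolverTrim (M : Automaton A Γ) : Prop :=
  ∃ r, M.IsResolver r ∧ ∀ q : M.Q, ∃ w ∈ M.Lang, ∃ n : ℕ, (M.resRun r w n).src = q

/-- Reachability along transitions of `M`. -/
def Reach (M : Automaton A Γ) (p q : M.Q) : Prop :=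
  Relation.ReflTransGen (fun x y => ∃ t ∈ M.delta, t.src = x ∧ t.dst = y) p q

/-- Nondeterministic choices lead to language-equivalent states. -/
def SemanticallyDeterministic (M : Automaton A Γ) : Prop :=
  ∀ t ∈ M.delta, ∀ t' ∈ M.delta, t.src = t'.src → t.lab = t'.lab →
    M.LangFrom t.dst = M.LangFrom t'.dst

/- CoBüchi notions: a coBüchi automaton has output alphabet `Set Unit`
(`𝒫(C)` with `|C| = 1`); a transition is a coBüchi transition iff its output
is `{()}` (i.e. `() ∈ out`), and safe iff its output is `∅`. -/

/-- A safe (non-coBüchi) transition from `p` to `q`. -/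
def SafeStep (M : Automaton A (Set Unit)) (p q : M.Q) : Prop :=
  ∃ t ∈ M.delta, t.src = p ∧ t.dst = q ∧ () ∉ t.out

/-- `p` and `q` lie in the same safe component (same SCC of the safe graph). -/
def SafeConn (M : Automaton A (Set Unit)) (p q : M.Q) : Prop :=
  Relation.ReflTransGen M.SafeStep p q ∧ Relation.ReflTransGen M.SafeStep q p

/-- The safe component (as a set of states) of `q`. -/
def safeComponentOf (M : Automaton A (Set Unit)) (q : M.Q) : Set M.Q :=
  {p | M.SafeConn p q}

/-- `(S, D)` is a safe component of `M`, given with its set of safe transitions. -/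
def IsSafeComponent (M : Automaton A (Set Unit)) (S : Set M.Q)
    (D : Set (AutTrans M.Q A (Set Unit))) : Prop :=
  (∃ q : M.Q, S = M.safeComponentOf q) ∧
    D = {t | t ∈ M.delta ∧ t.src ∈ S ∧ t.dst ∈ S ∧ () ∉ t.out}

/-- The safe language of the state `q`: words labelling an infinite safe path from `q`. -/
def SafeLang (M : Automaton A (Set Unit)) (q : M.Q) : Set (ℕ → A) :=
  {w | ∃ ρ : ℕ → AutTrans M.Q A (Set Unit),
    M.IsRunFrom q w ρ ∧ ∀ n : ℕ, () ∉ (ρ n).out}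

/-- The automaton restricted to safe transitions is deterministic. -/
def SafeDeterministic (M : Automaton A (Set Unit)) : Prop :=
  ∀ t ∈ M.delta, ∀ t' ∈ M.delta, () ∉ t.out → () ∉ t'.out →
    t.src = t'.src → t.lab = t'.lab → t = t'

/-- Every transition joining two distinct safe components is a coBüchi transition. -/
def NormalForm (M : Automaton A (Set Unit)) : Prop :=
  ∀ t ∈ M.delta, () ∉ t.out → M.SafeConn t.src t.dst

/-- A coBüchi automaton is nice if all states are reachable and it is
semantically deterministic, in normal form, and safe deterministic. -/
def Nice (M : Automaton A (Set Unit)) : Prop :=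
  (∀ q : M.Q, M.Reach M.init q) ∧ M.SemanticallyDeterministic ∧
    M.NormalForm ∧ M.SafeDeterministic

/-- Equivalent states with equal safe languages are equal. -/
def SafeMinimal (M : Automaton A (Set Unit)) : Prop :=
  ∀ p q : M.Q, M.LangFrom p = M.LangFrom q → M.SafeLang p = M.SafeLang q → p = q

/-- Equivalent states with safe languages comparable for inclusion lie in the
same safe component. -/
def SafeCentralised (M : Automaton A (Set Unit)) : Prop :=
  ∀ p q : M.Q, M.LangFrom p = M.LangFrom q →
    (M.SafeLang p ⊆ M.SafeLang q ∨ M.SafeLang q ⊆ M.SafeLang p) → M.SafeConn p q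

end Automaton

/-- The word `u · w`. -/
def wordAppend {A : Type} (u : List A) (w : ℕ → A) : ℕ → A :=
  fun n => if h : n < u.length then u.get ⟨n, h⟩ else w (n - u.length)

/-- The residual `u⁻¹L`. -/
def residualLang {A : Type} (u : List A) (L : Set (ℕ → A)) : Set (ℕ → A) :=
  {w | wordAppend u w ∈ L}

/-- `L` is prefix-independent: `u⁻¹L = L` for every finite word `u`. -/
def PrefixIndependent {A : Type} (L : Set (ℕ → A)) : Prop :=
  ∀ u : List A, residualLang u L = L

/-- The local alphabet `Σ_R` at the residual `R`: nonempty finite words `v`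
with `v⁻¹R = R` such that no proper nonempty prefix `v'` of `v`
satisfies `v'⁻¹R = R`.  (For `R = u⁻¹L` this says `(uv)⁻¹L = u⁻¹L` and
`(uv')⁻¹L ≠ u⁻¹L` for proper nonempty prefixes.) -/
def localAlphabet {A : Type} (R : Set (ℕ → A)) : Set (List A) :=
  {v | v ≠ [] ∧ residualLang v R = R ∧
    ∀ v' : List A, v' <+: v → v' ≠ [] → v' ≠ v → residualLang v' R ≠ R}

/-- `PathCol M q w X p`: there is a finite path of `M` from `q` to `p`
labelled by `w` whose transitions produce exactly the set of colours `X`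
(the union of the outputs along the path). -/
inductive PathCol {A C : Type} (M : Automaton A (Set C)) :
    M.Q → List A → Set C → M.Q → Prop
  | nil (q : M.Q) : PathCol M q [] ∅ q
  | cons {q r : M.Q} {a : A} {w : List A} {X : Set C}
      (t : AutTrans M.Q A (Set C)) (ht : t ∈ M.delta) (hsrc : t.src = q)
      (hlab : t.lab = a) (htail : PathCol M t.dst w X r) :
      PathCol M q (a :: w) (t.out ∪ X) r

/-- The localisation `A|_R` of a generalised coBüchi automaton `M` to the
residual `R`, with initial state `q0`: states are the states of `M`
recognising `R`, the alphabet is `Σ_R`, and there is a transition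
`q →^{w:X} p` for every finite path of `M` from `q` to `p` labelled by
`w ∈ Σ_R` producing the set of colours `X`. -/
noncomputable def localAut {A C : Type} (M : Automaton A (Set C)) (R : Set (ℕ → A))
    (q0 : {q : M.Q // M.LangFrom q = R}) :
    Automaton (↥(localAlphabet R)) (Set C) where
  Q := {q : M.Q // M.LangFrom q = R}
  fin := by
    letI := M.fin
    classical
    infer_instance
  init := q0
  delta := {t | PathCol M t.src.1 t.lab.1 t.out t.dst.1}
  acc := genCoBuchi C

/-- The automaton `M` with initial state `q`. -/
def withInit {A Γ : Type} (M : Automaton A Γ) (q : M.Q) : Automaton A Γ :=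
  { M with init := q }

/-- Recolour the automaton `M` via `f`, keeping states, initial state and the
underlying transitions, and replacing the acceptance condition by `acc'`. -/
def recolor {A Γ Γ' : Type} (M : Automaton A Γ) (f : AutTrans M.Q A Γ → Γ')
    (acc' : Set (ℕ → Γ')) : Automaton A Γ' where
  Q := M.Q
  fin := M.fin
  init := M.init
  delta := {t' | ∃ t ∈ M.delta, t'.src = t.src ∧ t'.lab = t.lab ∧ t'.out = f t ∧ t'.dst = t.dst}
  acc := acc'

/-- Concatenation of the first `k` blocks of a sequence of finite words. -/
def flattenPrefix {A : Type} (u : ℕ → List A) (k : ℕ) : List A :=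
  (List.ofFn fun i : Fin k => u i).flatten

/-- `x ∈ A^ω` is the concatenation of the infinite sequence of finite words `u`. -/
def IsFlatten {A : Type} (u : ℕ → List A) (x : ℕ → A) : Prop :=
  ∀ (k n : ℕ) (h : n < (flattenPrefix u k).length),
    (flattenPrefix u k).get ⟨n, h⟩ = x n

/-- Cascade composition `B ∘ M`: the outputs of `M` are fed as inputs to `B`. -/
def composeAut {A Γ Γ' : Type} (B : Automaton Γ Γ') (M : Automaton A Γ) :
    Automaton A Γ' where
  Q := M.Q × B.Q
  fin := by letI := M.fin; letI := B.fin; infer_instance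
  init := (M.init, B.init)
  delta := {t | ∃ tM ∈ M.delta, ∃ tB ∈ B.delta,
    t.src = (tM.src, tB.src) ∧ t.lab = tM.lab ∧ tB.lab = tM.out ∧
    t.out = tB.out ∧ t.dst = (tM.dst, tB.dst)}
  acc := B.acc

/-- The language `L_G = ⋂_v L_v` associated with a graph `G`: words over the
vertices such that for every vertex `v`, either the factor `vv` occurs
infinitely often, or letters outside the closed neighbourhood `N[v]` occur
infinitely often. -/
def LG {V : Type} (G : SimpleGraph V) : Set (ℕ → V) :=
  {w | ∀ v : V, (∀ n : ℕ, ∃ m : ℕ, n ≤ m ∧ w m = v ∧ w (m + 1) = v) ∨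
      (∀ n : ℕ, ∃ m : ℕ, n ≤ m ∧ w m ≠ v ∧ ¬ G.Adj v (w m))}

/-!
A path of `A|_R` is the same thing as a path of `A` between states recognising `R` whose label
is a concatenation of local letters, and, by semantic determinism, every label `u` of a path
between two such states satisfies `u⁻¹R = R` and therefore factors into local letters. So
runs, safe paths and safe components pass between `A` and `A|_R`; this yields semantic
determinism, normal form and safe determinism of `A|_R`. Inclusion of safe languages in `A|_R`
implies inclusion in `A`: a safely read prefix from `p` closes, by normal form, into a safe cycle
at `p`, whose periodic word is a safe word of `A|_R`. This transfers safe minimality and safe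
centralisation.

Reachability in `A|_R` needs equivalent states `p, q` of `A` to be reachable from one another.
If no state `y` reachable from `p` had a safe language containing that of an equivalent state `z`
in the safe component of `q`, one could build, block by block, a safe word from `q` whose `k`-th
block cannot be read safely by any state reachable from `p` that is equivalent to the `k`-th
block's starting point. That word lies in `L(q) = L(p)`, and an accepting run from `p` on it is
eventually safe, so at a later block boundary it sits in such a state and reads the next block
safely. Hence such `y, z` exist, and safe centralisation puts them in one safe component.

For a transient `R`, a safe transition leaving a state recognising `R` closes, by normal form,
into a safe cycle whose label is in `Σ_R⁺`; hence these states have empty safe language and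
safe minimality leaves only one, while a run given by the resolver provides one.
-/

open Automaton

section Words

variable {A : Type}

def wordPrefix (w : ℕ → A) (n : ℕ) : List A := List.ofFn fun i : Fin n => w i

@[simp] lemma length_wordPrefix (w : ℕ → A) (n : ℕ) : (wordPrefix w n).length = n := by
  simp [wordPrefix]

@[simp] lemma getElem_wordPrefix (w : ℕ → A) (n i : ℕ) (h : i < (wordPrefix w n).length) :
    (wordPrefix w n)[i] = w i := by
  simp [wordPrefix]

lemma wordPrefix_add (w : ℕ → A) (n k : ℕ) :
    wordPrefix w (n + k) = wordPrefix w n ++ wordPrefix (fun i => w (n + i)) k := by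
  simp [wordPrefix, List.ofFn_add]

lemma wordPrefix_succ (w : ℕ → A) (n : ℕ) : wordPrefix w (n + 1) = wordPrefix w n ++ [w n] := by
  rw [wordPrefix_add]
  simp [wordPrefix]

lemma wordPrefix_prefix (w : ℕ → A) {m n : ℕ} (h : m ≤ n) : wordPrefix w m <+: wordPrefix w n := by
  obtain ⟨k, rfl⟩ := Nat.exists_eq_add_of_le h
  rw [wordPrefix_add]
  exact List.prefix_append _ _

lemma wordAppend_of_lt {u : List A} (w : ℕ → A) {n : ℕ} (h : n < u.length) :
    wordAppend u w n = u[n] := by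
  simp [wordAppend, h]

lemma wordAppend_of_le {u : List A} (w : ℕ → A) {n : ℕ} (h : u.length ≤ n) :
    wordAppend u w n = w (n - u.length) := by
  simp [wordAppend, Nat.not_lt.2 h]

lemma wordAppend_append (u v : List A) (w : ℕ → A) :
    wordAppend (u ++ v) w = wordAppend u (wordAppend v w) := by
  funext n
  rcases lt_or_ge n u.length with h | h
  · rw [wordAppend_of_lt _ (by simp; omega), wordAppend_of_lt _ h, List.getElem_append_left h]
  rcases lt_or_ge n (u.length + v.length) with h' | h'
  · rw [wordAppend_of_lt _ (by simp; omega), wordAppend_of_le _ h, wordAppend_of_lt _ (by omega),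
      List.getElem_append_right h]
  · rw [wordAppend_of_le _ (by simp; omega), wordAppend_of_le _ h, wordAppend_of_le _ (by omega)]
    congr 1
    simp only [List.length_append]
    omega

lemma wordPrefix_wordAppend (u : List A) (w : ℕ → A) : wordPrefix (wordAppend u w) u.length = u :=
  List.ext_getElem (by simp) fun i _ h => by simp [wordAppend_of_lt w h]

lemma wordAppend_wordPrefix (x : ℕ → A) (K : ℕ) :
    wordAppend (wordPrefix x K) (fun n => x (K + n)) = x := by
  funext n
  rcases lt_or_ge n K with h | h
  · rw [wordAppend_of_lt _ (by simpa using h), getElem_wordPrefix]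
  · rw [wordAppend_of_le _ (by simpa using h), length_wordPrefix, Nat.add_sub_cancel' h]

@[simp] lemma wordAppend_nil (w : ℕ → A) : wordAppend [] w = w := by
  funext n
  simp [wordAppend]

@[simp] lemma residualLang_nil (L : Set (ℕ → A)) : residualLang [] L = L := by
  ext w
  simp [residualLang]

lemma residualLang_append (u v : List A) (L : Set (ℕ → A)) :
    residualLang (u ++ v) L = residualLang v (residualLang u L) := by
  ext w
  simp [residualLang, wordAppend_append]

end Words

lemma mem_genCoBuchi_unit {f : ℕ → Set Unit} :
    f ∈ genCoBuchi Unit ↔ ∃ n, ∀ m, n ≤ m → () ∉ f m :=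
  ⟨fun ⟨_, n, h⟩ => ⟨n, h⟩, fun ⟨n, h⟩ => ⟨(), n, h⟩⟩

lemma eq_empty_of_unit_notMem {X : Set Unit} (h : () ∉ X) : X = ∅ :=
  Set.eq_empty_of_forall_notMem fun _ => h

section Paths

variable {A C : Type} {M : Automaton A (Set C)}

lemma pathCol_nil_iff {q p : M.Q} {X : Set C} : PathCol M q [] X p ↔ p = q ∧ X = ∅ :=
  ⟨fun h => by cases h; exact ⟨rfl, rfl⟩, fun ⟨hp, hX⟩ => by subst hp hX; exact .nil _⟩

lemma pathCol_cons_iff {q p : M.Q} {a : A} {u : List A} {X : Set C} :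
    PathCol M q (a :: u) X p ↔
      ∃ t ∈ M.delta, t.src = q ∧ t.lab = a ∧ ∃ Y, PathCol M t.dst u Y p ∧ X = t.out ∪ Y := by
  refine ⟨fun h => ?_, fun ⟨t, ht, hsrc, hlab, Y, hY, hX⟩ => hX ▸ .cons t ht hsrc hlab hY⟩
  cases h with
  | cons t ht hsrc hlab htail => exact ⟨t, ht, hsrc, hlab, _, htail, rfl⟩

lemma pathCol_singleton_iff {q p : M.Q} {a : A} {X : Set C} :
    PathCol M q [a] X p ↔ ∃ t ∈ M.delta, t.src = q ∧ t.lab = a ∧ t.out = X ∧ t.dst = p := by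
  simp only [pathCol_cons_iff, pathCol_nil_iff]
  constructor
  · rintro ⟨t, ht, hsrc, hlab, _, ⟨rfl, rfl⟩, rfl⟩
    exact ⟨t, ht, hsrc, hlab, (Set.union_empty _).symm, rfl⟩
  · rintro ⟨t, ht, hsrc, hlab, rfl, rfl⟩
    exact ⟨t, ht, hsrc, hlab, ∅, ⟨rfl, rfl⟩, (Set.union_empty _).symm⟩

lemma PathCol.append {q r p : M.Q} {u v : List A} {X Y : Set C}
    (h : PathCol M q u X r) (h' : PathCol M r v Y p) : PathCol M q (u ++ v) (X ∪ Y) p := by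
  induction h with
  | nil q => simpa using h'
  | cons t ht hsrc hlab _ ih => simpa [Set.union_assoc] using PathCol.cons t ht hsrc hlab (ih h')

lemma pathCol_append_iff {q p : M.Q} {u v : List A} {X : Set C} :
    PathCol M q (u ++ v) X p ↔
      ∃ r X₁ X₂, PathCol M q u X₁ r ∧ PathCol M r v X₂ p ∧ X = X₁ ∪ X₂ := by
  refine ⟨fun h => ?_, fun ⟨r, X₁, X₂, h₁, h₂, hX⟩ => hX ▸ h₁.append h₂⟩
  induction u generalizing q X with
  | nil => exact ⟨q, ∅, X, .nil q, h, (Set.empty_union X).symm⟩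
  | cons a u ih =>
    obtain ⟨t, ht, hsrc, hlab, Y, hY, rfl⟩ := pathCol_cons_iff.1 h
    obtain ⟨r, X₁, X₂, h₁, h₂, rfl⟩ := ih hY
    exact ⟨r, t.out ∪ X₁, X₂, .cons t ht hsrc hlab h₁, h₂, (Set.union_assoc _ _ _).symm⟩

lemma pathCol_append_empty_iff {q p : M.Q} {u v : List A} :
    PathCol M q (u ++ v) ∅ p ↔ ∃ r, PathCol M q u ∅ r ∧ PathCol M r v ∅ p := by
  rw [pathCol_append_iff]
  constructor
  · rintro ⟨r, X₁, X₂, h₁, h₂, hX⟩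
    obtain ⟨rfl, rfl⟩ := Set.union_empty_iff.1 hX.symm
    exact ⟨r, h₁, h₂⟩
  · rintro ⟨r, h₁, h₂⟩
    exact ⟨r, ∅, ∅, h₁, h₂, (Set.union_empty _).symm⟩

lemma PathCol.reach {q p : M.Q} {u : List A} {X : Set C} (h : PathCol M q u X p) :
    M.Reach q p := by
  induction h with
  | nil => exact .refl
  | cons t ht hsrc _ _ ih => exact .head ⟨t, ht, hsrc, rfl⟩ ih

lemma reach_iff_exists_pathCol {q p : M.Q} : M.Reach q p ↔ ∃ u X, PathCol M q u X p := by
  refine ⟨fun h => ?_, fun ⟨_, _, h⟩ => h.reach⟩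
  induction h with
  | refl => exact ⟨[], ∅, .nil q⟩
  | tail _ hstep ih =>
    obtain ⟨u, X, hu⟩ := ih
    obtain ⟨t, ht, hsrc, rfl⟩ := hstep
    exact ⟨u ++ [t.lab], _, hu.append (pathCol_singleton_iff.2 ⟨t, ht, hsrc, rfl, rfl, rfl⟩)⟩

end Paths

section Runs

variable {A Γ : Type} {M : Automaton A Γ} {q : M.Q} {w : ℕ → A} {ρ : ℕ → AutTrans M.Q A Γ}

lemma Automaton.IsRunFrom.shift (h : M.IsRunFrom q w ρ) (n : ℕ) :
    M.IsRunFrom (ρ n).src (fun i => w (n + i)) (fun i => ρ (n + i)) :=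
  ⟨rfl, fun i => h.2 (n + i)⟩

lemma Automaton.IsRunFrom.cons {t : AutTrans M.Q A Γ} (ht : t ∈ M.delta)
    (h : M.IsRunFrom t.dst w ρ) :
    M.IsRunFrom t.src (wordAppend [t.lab] w) (fun n => Nat.casesOn n t ρ) := by
  refine ⟨rfl, fun n => ?_⟩
  cases n with
  | zero => exact ⟨ht, by simp [wordAppend], h.1.symm⟩
  | succ n => exact ⟨(h.2 n).1, by simpa [wordAppend] using (h.2 n).2.1, (h.2 n).2.2⟩

end Runs

lemma Automaton.IsRunFrom.exists_pathCol {A C : Type} {M : Automaton A (Set C)} {q : M.Q}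
    {w : ℕ → A} {ρ : ℕ → AutTrans M.Q A (Set C)} (h : M.IsRunFrom q w ρ) (n : ℕ) :
    ∃ X, PathCol M q (wordPrefix w n) X (ρ n).src ∧ ∀ c ∈ X, ∃ i < n, c ∈ (ρ i).out := by
  induction n with
  | zero => exact ⟨∅, by rw [h.1]; exact .nil q, by simp⟩
  | succ n ih =>
    obtain ⟨X, hX, hXc⟩ := ih
    obtain ⟨hmem, hlab, hdst⟩ := h.2 n
    refine ⟨X ∪ (ρ n).out, ?_, ?_⟩
    · rw [wordPrefix_succ]
      exact hX.append (pathCol_singleton_iff.2 ⟨ρ n, hmem, rfl, hlab, rfl, hdst⟩)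
    · rintro c (hc | hc)
      · obtain ⟨i, hi, hci⟩ := hXc c hc
        exact ⟨i, by omega, hci⟩
      · exact ⟨n, by omega, hc⟩

namespace Automaton

variable {A : Type} {M : Automaton A (Set Unit)}

lemma SafeConn.refl (q : M.Q) : M.SafeConn q q := ⟨.refl, .refl⟩

lemma SafeConn.symm {q p : M.Q} (h : M.SafeConn q p) : M.SafeConn p q := ⟨h.2, h.1⟩

lemma SafeConn.trans {q p r : M.Q} (h : M.SafeConn q p) (h' : M.SafeConn p r) :
    M.SafeConn q r :=
  ⟨h.1.trans h'.1, h'.2.trans h.2⟩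

lemma SafeConn.reach {q p : M.Q} (h : M.SafeConn q p) : M.Reach q p :=
  Relation.ReflTransGen.mono (p := fun x y => ∃ t ∈ M.delta, t.src = x ∧ t.dst = y)
    (fun _ _ ⟨t, ht, hs, hd, _⟩ => ⟨t, ht, hs, hd⟩) _ _ h.1

def SafeReadable (M : Automaton A (Set Unit)) (q : M.Q) (u : List A) : Prop :=
  ∃ p, PathCol M q u ∅ p

lemma SafeReadable.of_prefix {q : M.Q} {u v : List A} (h : M.SafeReadable q v) (huv : u <+: v) :
    M.SafeReadable q u := by
  obtain ⟨u', rfl⟩ := huv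
  obtain ⟨p, hp⟩ := h
  obtain ⟨r, hr, -⟩ := pathCol_append_empty_iff.1 hp
  exact ⟨r, hr⟩

lemma safeLang_subset_langFrom (hacc : M.acc = genCoBuchi Unit) (q : M.Q) :
    M.SafeLang q ⊆ M.LangFrom q :=
  fun _ ⟨ρ, hρ, hsafe⟩ => ⟨ρ, hρ, hacc ▸ mem_genCoBuchi_unit.2 ⟨0, fun m _ => hsafe m⟩⟩

section SemanticallyDeterministic

variable (hacc : M.acc = genCoBuchi Unit) (hsd : M.SemanticallyDeterministic)
include hacc hsd

lemma langFrom_dst {t : AutTrans M.Q A (Set Unit)} (ht : t ∈ M.delta) :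
    M.LangFrom t.dst = residualLang [t.lab] (M.LangFrom t.src) := by
  ext w
  constructor
  · rintro ⟨ρ, hρ, hρacc⟩
    refine ⟨_, hρ.cons ht, ?_⟩
    rw [hacc, mem_genCoBuchi_unit] at hρacc ⊢
    obtain ⟨n, hn⟩ := hρacc
    refine ⟨n + 1, fun m hm => ?_⟩
    cases m with
    | zero => omega
    | succ m => exact hn m (by omega)
  · rintro ⟨ρ, hρ, hρacc⟩
    obtain ⟨hmem, hlab, hdst⟩ := hρ.2 0
    rw [← hsd _ hmem _ ht hρ.1 (by simp [hlab, wordAppend]), hdst]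
    have hw : (fun i => wordAppend [t.lab] w (1 + i)) = w := funext fun i => by simp [wordAppend]
    refine ⟨_, hw ▸ hρ.shift 1, ?_⟩
    rw [hacc, mem_genCoBuchi_unit] at hρacc ⊢
    obtain ⟨n, hn⟩ := hρacc
    exact ⟨n, fun m hm => hn (1 + m) (by omega)⟩

lemma _root_.PathCol.langFrom_eq {q p : M.Q} {u : List A} {X : Set Unit} (h : PathCol M q u X p) :
    M.LangFrom p = residualLang u (M.LangFrom q) := by
  induction h with
  | nil => simp
  | cons t ht hsrc hlab _ ih =>
    rw [ih, langFrom_dst hacc hsd ht, ← residualLang_append, hsrc, hlab]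
    rfl

lemma IsRunFrom.langFrom_src {q : M.Q} {w : ℕ → A} {ρ : ℕ → AutTrans M.Q A (Set Unit)}
    (h : M.IsRunFrom q w ρ) (n : ℕ) :
    M.LangFrom (ρ n).src = residualLang (wordPrefix w n) (M.LangFrom q) :=
  let ⟨_, hX, _⟩ := h.exists_pathCol n
  hX.langFrom_eq hacc hsd

end SemanticallyDeterministic

lemma _root_.PathCol.dst_eq_of_safe (hsdet : M.SafeDeterministic) {q p p' : M.Q} {u : List A}
    (h : PathCol M q u ∅ p) (h' : PathCol M q u ∅ p') : p = p' := by
  induction u generalizing q with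
  | nil => exact (pathCol_nil_iff.1 h).1.trans (pathCol_nil_iff.1 h').1.symm
  | cons a u ih =>
    obtain ⟨t, ht, hsrc, hlab, Y, hY, hX⟩ := pathCol_cons_iff.1 h
    obtain ⟨t', ht', hsrc', hlab', Y', hY', hX'⟩ := pathCol_cons_iff.1 h'
    obtain ⟨ho, rfl⟩ := Set.union_empty_iff.1 hX.symm
    obtain ⟨ho', rfl⟩ := Set.union_empty_iff.1 hX'.symm
    obtain rfl := hsdet t ht t' ht' (by simp [ho]) (by simp [ho']) (hsrc.trans hsrc'.symm)
      (hlab.trans hlab'.symm)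
    exact ih hY hY'

lemma _root_.PathCol.safeConn (hnf : M.NormalForm) {q p : M.Q} {u : List A} {X : Set Unit}
    (h : PathCol M q u X p) (hX : () ∉ X) : M.SafeConn q p := by
  induction h with
  | nil q => exact SafeConn.refl q
  | cons t ht hsrc _ _ ih =>
    rw [Set.mem_union, not_or] at hX
    exact (hsrc ▸ hnf t ht hX.1).trans (ih hX.2)

lemma _root_.PathCol.reflTransGen_safeStep {q p : M.Q} {u : List A} {X : Set Unit}
    (h : PathCol M q u X p) (hX : () ∉ X) : Relation.ReflTransGen M.SafeStep q p := by
  induction h with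
  | nil => exact .refl
  | cons t ht hsrc _ _ ih =>
    rw [Set.mem_union, not_or] at hX
    exact .head ⟨t, ht, hsrc, rfl, hX.1⟩ (ih hX.2)

lemma reflTransGen_safeStep_iff {q p : M.Q} :
    Relation.ReflTransGen M.SafeStep q p ↔ ∃ u, PathCol M q u ∅ p := by
  refine ⟨fun h => ?_, fun ⟨_, h⟩ => h.reflTransGen_safeStep (Set.notMem_empty _)⟩
  induction h with
  | refl => exact ⟨[], .nil q⟩
  | tail _ hstep ih =>
    obtain ⟨u, hu⟩ := ih
    obtain ⟨t, ht, hsrc, rfl, hout⟩ := hstep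
    refine ⟨u ++ [t.lab], by simpa using hu.append (pathCol_singleton_iff.2
      ⟨t, ht, hsrc, rfl, eq_empty_of_unit_notMem hout, rfl⟩)⟩

lemma safeReadable_of_mem_safeLang {q : M.Q} {w : ℕ → A} (hw : w ∈ M.SafeLang q) (n : ℕ) :
    M.SafeReadable q (wordPrefix w n) := by
  obtain ⟨ρ, hρ, hsafe⟩ := hw
  obtain ⟨X, hX, hXc⟩ := hρ.exists_pathCol n
  have hX0 : X = ∅ := eq_empty_of_unit_notMem fun hc =>
    let ⟨i, _, hi⟩ := hXc () hc
    hsafe i hi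
  exact ⟨_, hX0 ▸ hX⟩

lemma mem_safeLang_iff (hsdet : M.SafeDeterministic) {q : M.Q} {w : ℕ → A} :
    w ∈ M.SafeLang q ↔ ∀ n, M.SafeReadable q (wordPrefix w n) := by
  refine ⟨safeReadable_of_mem_safeLang, fun h => ?_⟩
  choose x hx using h
  have step : ∀ n, ∃ t ∈ M.delta,
      t.src = x n ∧ t.lab = w n ∧ t.out = ∅ ∧ t.dst = x (n + 1) := by
    intro n
    obtain ⟨r, hr, hlast⟩ := pathCol_append_empty_iff.1 (wordPrefix_succ w n ▸ hx (n + 1))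
    obtain rfl := hr.dst_eq_of_safe hsdet (hx n)
    exact pathCol_singleton_iff.1 hlast
  choose t ht hsrc hlab hout hdst using step
  refine ⟨t, ⟨?_, fun n => ⟨ht n, hlab n, (hdst n).trans (hsrc (n + 1)).symm⟩⟩,
    fun n => by simp [hout n]⟩
  rw [hsrc 0]
  exact (pathCol_nil_iff.1 (hx 0)).1

end Automaton

section Flatten

variable {A : Type} {u : ℕ → List A} {x : ℕ → A}

lemma flattenPrefix_add (u : ℕ → List A) (k j : ℕ) :
    flattenPrefix u (k + j) = flattenPrefix u k ++ flattenPrefix (fun i => u (k + i)) j := by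
  simp [flattenPrefix, List.ofFn_add]

lemma flattenPrefix_succ (u : ℕ → List A) (k : ℕ) :
    flattenPrefix u (k + 1) = flattenPrefix u k ++ u k := by
  rw [flattenPrefix_add]
  simp [flattenPrefix]

lemma flattenPrefix_prefix (u : ℕ → List A) {k m : ℕ} (h : k ≤ m) :
    flattenPrefix u k <+: flattenPrefix u m := by
  obtain ⟨j, rfl⟩ := Nat.exists_eq_add_of_le h
  rw [flattenPrefix_add]
  exact List.prefix_append _ _

lemma le_length_flattenPrefix (hu : ∀ k, u k ≠ []) (k : ℕ) : k ≤ (flattenPrefix u k).length := by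
  induction k with
  | zero => simp
  | succ k ih =>
    have := List.length_pos_iff.2 (hu k)
    rw [flattenPrefix_succ, List.length_append]
    omega

lemma flatten_map_wordPrefix {B : Type} (f : B → List A) (W : ℕ → B) (k : ℕ) :
    ((wordPrefix W k).map f).flatten = flattenPrefix (fun i => f (W i)) k := by
  simp only [wordPrefix, List.map_ofFn, flattenPrefix]
  rfl

lemma exists_isFlatten (hu : ∀ k, u k ≠ []) : ∃ x, IsFlatten u x := by
  refine ⟨fun n => (flattenPrefix u (n + 1))[n]'(by
    have := le_length_flattenPrefix hu (n + 1); omega), fun k n h => ?_⟩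
  rw [List.get_eq_getElem]
  rcases le_total k (n + 1) with hk | hk
  · exact (flattenPrefix_prefix u hk).getElem h
  · exact ((flattenPrefix_prefix u hk).getElem _).symm

namespace IsFlatten

lemma wordPrefix_eq (h : IsFlatten u x) (k : ℕ) :
    wordPrefix x (flattenPrefix u k).length = flattenPrefix u k :=
  List.ext_getElem (by simp) fun i _ hi => by simpa using (h k i hi).symm

lemma shift (h : IsFlatten u x) (k : ℕ) :
    IsFlatten (fun i => u (k + i)) (fun n => x ((flattenPrefix u k).length + n)) := by
  intro j n hn
  have hlen : (flattenPrefix u k).length + n < (flattenPrefix u (k + j)).length := by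
    rw [flattenPrefix_add, List.length_append]
    omega
  show _ = x _
  rw [← h (k + j) _ hlen]
  simp [List.getElem_of_eq (flattenPrefix_add u k j) hlen, List.getElem_append_right]

lemma wordPrefix_shift_eq (h : IsFlatten u x) (k : ℕ) :
    wordPrefix (fun n => x ((flattenPrefix u k).length + n)) (u k).length = u k := by
  simpa [flattenPrefix] using (h.shift k).wordPrefix_eq 1

lemma mem_safeLang {M : Automaton A (Set Unit)} (hsdet : M.SafeDeterministic) {q : M.Q}
    (hu : ∀ k, u k ≠ []) (hx : IsFlatten u x) (h : ∀ k, M.SafeReadable q (flattenPrefix u k)) :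
    x ∈ M.SafeLang q := by
  refine (mem_safeLang_iff hsdet).2 fun n => (h n).of_prefix ?_
  rw [← hx.wordPrefix_eq n]
  exact wordPrefix_prefix x (le_length_flattenPrefix hu n)

end IsFlatten

lemma exists_mem_safeLang_of_cycle {M : Automaton A (Set Unit)} (hsdet : M.SafeDeterministic)
    {p : M.Q} {v : List A} (h : PathCol M p v ∅ p) (hv : v ≠ []) :
    ∃ x ∈ M.SafeLang p, wordPrefix x v.length = v := by
  obtain ⟨x, hx⟩ := exists_isFlatten (u := fun _ => v) fun _ => hv
  have hcycle : ∀ k, PathCol M p (flattenPrefix (fun _ => v) k) ∅ p := by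
    intro k
    induction k with
    | zero => exact .nil p
    | succ k ih => simpa [flattenPrefix_succ] using ih.append h
  refine ⟨x, hx.mem_safeLang hsdet (fun _ => hv) fun k => ⟨p, hcycle k⟩, ?_⟩
  simpa [flattenPrefix] using hx.wordPrefix_eq 1

end Flatten

section LocalAlphabet

variable {A : Type} {R : Set (ℕ → A)}

lemma exists_mem_localAlphabet_prefix {u : List A} (hu : u ≠ []) (h : residualLang u R = R) :
    ∃ v ∈ localAlphabet R, ∃ u', u = v ++ u' := by
  classical
  have hex : ∃ j, 0 < j ∧ residualLang (u.take j) R = R :=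
    ⟨u.length, List.length_pos_iff.2 hu, by rwa [List.take_length]⟩
  obtain ⟨hpos, hres⟩ := Nat.find_spec hex
  have hle : Nat.find hex ≤ u.length :=
    Nat.find_le ⟨List.length_pos_iff.2 hu, by rwa [List.take_length]⟩
  refine ⟨u.take (Nat.find hex), ⟨?_, hres, ?_⟩, u.drop (Nat.find hex),
    (List.take_append_drop _ _).symm⟩
  · rw [← List.length_pos_iff, List.length_take]
    omega
  · intro v' hpre hne hneq hres'
    have hlen : v'.length < Nat.find hex := by
      have := hpre.length_le
      rw [List.length_take] at this
      exact lt_of_le_of_ne (by omega) fun heq => hneq (hpre.eq_of_length (by simp; omega))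
    have hv' : v' = u.take v'.length :=
      List.prefix_iff_eq_take.1 (hpre.trans (List.take_prefix _ u))
    exact Nat.find_min hex hlen ⟨List.length_pos_iff.2 hne, by rwa [← hv']⟩

lemma localAlphabet_nonempty_of_residualLang {u : List A} (hu : u ≠ [])
    (h : residualLang u R = R) : (localAlphabet R).Nonempty :=
  let ⟨v, hv, _⟩ := exists_mem_localAlphabet_prefix hu h
  ⟨v, hv⟩

lemma exists_flatten_eq_of_residualLang {u : List A} (h : residualLang u R = R) :
    ∃ bl : List (localAlphabet R), (bl.map Subtype.val).flatten = u := by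
  generalize hn : u.length = n
  induction n using Nat.strong_induction_on generalizing u with
  | _ n ih =>
    rcases eq_or_ne u [] with rfl | hu
    · exact ⟨[], rfl⟩
    obtain ⟨v, hv, u', rfl⟩ := exists_mem_localAlphabet_prefix hu h
    rw [residualLang_append, hv.2.1] at h
    have hlt : u'.length < n := by
      have := List.length_pos_iff.2 hv.1
      simp only [List.length_append] at hn
      omega
    obtain ⟨bl, hbl⟩ := ih _ hlt h rfl
    exact ⟨⟨v, hv⟩ :: bl, by rw [List.map_cons, List.flatten_cons, hbl]⟩

lemma residualLang_flattenPrefix (W : ℕ → localAlphabet R) (k : ℕ) :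
    residualLang (flattenPrefix (fun i => (W i).1) k) R = R := by
  induction k with
  | zero => simp [flattenPrefix]
  | succ k ih => rw [flattenPrefix_succ, residualLang_append, ih, (W k).2.2.1]

end LocalAlphabet

section Localisation

variable {A : Type} {R : Set (ℕ → A)}

lemma PathCol.flatten_of_localAut {C : Type} {M : Automaton A (Set C)}
    {q0 : {q : M.Q // M.LangFrom q = R}} {s s' : (localAut M R q0).Q}
    {bl : List (localAlphabet R)} {X : Set C} (h : PathCol (localAut M R q0) s bl X s') :
    PathCol M s.1 (bl.map Subtype.val).flatten X s'.1 := by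
  induction h with
  | nil => exact .nil _
  | cons t ht hsrc hlab _ ih =>
    subst hsrc hlab
    simpa using PathCol.append ht ih

variable {M : Automaton A (Set Unit)} (q0 : {q : M.Q // M.LangFrom q = R})

lemma localAut_safeDeterministic (hsdet : M.SafeDeterministic) :
    (localAut M R q0).SafeDeterministic := by
  rintro ⟨s, a, o, d⟩ ht ⟨s', a', o', d'⟩ ht' hout hout' rfl rfl
  obtain rfl := eq_empty_of_unit_notMem hout
  obtain rfl := eq_empty_of_unit_notMem hout'
  obtain rfl : d = d' := Subtype.ext (PathCol.dst_eq_of_safe hsdet ht ht')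
  rfl

variable (hacc : M.acc = genCoBuchi Unit) (hsd : M.SemanticallyDeterministic)
include hacc hsd

lemma PathCol.localAut_of_flatten {bl : List (localAlphabet R)} :
    ∀ {q p : M.Q} {X : Set Unit} (hq : M.LangFrom q = R) (hp : M.LangFrom p = R),
      PathCol M q (bl.map Subtype.val).flatten X p →
      PathCol (localAut M R q0) ⟨q, hq⟩ bl X ⟨p, hp⟩ := by
  induction bl with
  | nil =>
    intro q p X hq hp h
    obtain ⟨rfl, rfl⟩ := pathCol_nil_iff.1 h
    exact .nil _
  | cons v bl ih =>
    intro q p X hq hp h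
    obtain ⟨r, X₁, X₂, h₁, h₂, rfl⟩ := pathCol_append_iff.1 h
    have hr : M.LangFrom r = R := by rw [h₁.langFrom_eq hacc hsd, hq, v.2.2.1]
    exact .cons (M := localAut M R q0) (AutTrans.mk ⟨q, hq⟩ v X₁ ⟨r, hr⟩) h₁ rfl rfl (ih hr hp h₂)

lemma PathCol.exists_localAut {s s' : (localAut M R q0).Q} {u : List A} {X : Set Unit}
    (h : PathCol M s.1 u X s'.1) :
    ∃ bl : List (localAlphabet R), (bl.map Subtype.val).flatten = u ∧
      PathCol (localAut M R q0) s bl X s' := by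
  have hres : residualLang u R = R := by
    have := h.langFrom_eq hacc hsd
    rwa [s.2, s'.2, eq_comm] at this
  obtain ⟨bl, rfl⟩ := exists_flatten_eq_of_residualLang hres
  exact ⟨bl, rfl, h.localAut_of_flatten q0 hacc hsd s.2 s'.2⟩

lemma localAut_reach_of_reach {s s' : (localAut M R q0).Q} (h : M.Reach s.1 s'.1) :
    (localAut M R q0).Reach s s' := by
  obtain ⟨u, X, hu⟩ := reach_iff_exists_pathCol.1 h
  obtain ⟨_, -, h'⟩ := hu.exists_localAut q0 hacc hsd
  exact h'.reach

lemma localAut_safeConn_of_safeConn {s s' : (localAut M R q0).Q} (h : M.SafeConn s.1 s'.1) :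
    (localAut M R q0).SafeConn s s' := by
  have transfer : ∀ {s s' : (localAut M R q0).Q}, Relation.ReflTransGen M.SafeStep s.1 s'.1 →
      Relation.ReflTransGen (localAut M R q0).SafeStep s s' := fun h => by
    obtain ⟨u, hu⟩ := reflTransGen_safeStep_iff.1 h
    obtain ⟨bl, -, h'⟩ := hu.exists_localAut q0 hacc hsd
    exact reflTransGen_safeStep_iff.2 ⟨bl, h'⟩
  exact ⟨transfer h.1, transfer h.2⟩

lemma localAut_normalForm (hnf : M.NormalForm) : (localAut M R q0).NormalForm :=
  fun _ ht hout => localAut_safeConn_of_safeConn q0 hacc hsd (PathCol.safeConn hnf ht hout)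

lemma langFrom_localAut_iff (hsdet : M.SafeDeterministic) {s : (localAut M R q0).Q}
    {W : ℕ → localAlphabet R} {x : ℕ → A} (hx : IsFlatten (fun k => (W k).1) x) :
    W ∈ (localAut M R q0).LangFrom s ↔ x ∈ R := by
  constructor
  · rintro ⟨τ, hτ, hτacc⟩
    obtain ⟨k₀, hk₀⟩ := mem_genCoBuchi_unit.1 hτacc
    obtain ⟨X, hX, -⟩ := hτ.exists_pathCol k₀
    have hpre := hX.flatten_of_localAut
    rw [flatten_map_wordPrefix] at hpre
    have hsafe : (fun n => x ((flattenPrefix (fun k => (W k).1) k₀).length + n)) ∈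
        M.SafeLang (τ k₀).src.1 := by
      refine (hx.shift k₀).mem_safeLang hsdet (fun i => (W (k₀ + i)).2.1) fun j => ?_
      have hτsafe : (fun i => W (k₀ + i)) ∈ (localAut M R q0).SafeLang (τ k₀).src :=
        ⟨_, hτ.shift k₀, fun i => hk₀ _ (by omega)⟩
      obtain ⟨s', hs'⟩ := safeReadable_of_mem_safeLang hτsafe j
      rw [← flatten_map_wordPrefix]
      exact ⟨s'.1, hs'.flatten_of_localAut⟩
    have hmem : x ∈ M.LangFrom s.1 := by
      rw [← wordAppend_wordPrefix x (flattenPrefix (fun k => (W k).1) k₀).length,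
        hx.wordPrefix_eq k₀]
      have := safeLang_subset_langFrom hacc _ hsafe
      rwa [hpre.langFrom_eq hacc hsd] at this
    rwa [s.2] at hmem
  · intro hxR
    obtain ⟨ρ, hρ, hρacc⟩ : x ∈ M.LangFrom s.1 := by rwa [s.2]
    obtain ⟨n₀, hn₀⟩ := mem_genCoBuchi_unit.1 (hacc ▸ hρacc)
    set u := fun k => (W k).1
    set b := fun k => (flattenPrefix u k).length
    have hstate : ∀ k, M.LangFrom (ρ (b k)).src = R := fun k => by
      rw [hρ.langFrom_src hacc hsd, hx.wordPrefix_eq, s.2, residualLang_flattenPrefix]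
    have hblock : ∀ k, ∃ X, PathCol M (ρ (b k)).src (u k) X (ρ (b (k + 1))).src ∧
        (n₀ ≤ k → () ∉ X) := fun k => by
      obtain ⟨X, hX, hXc⟩ := (hρ.shift (b k)).exists_pathCol (u k).length
      refine ⟨X, ?_, fun hk hc => ?_⟩
      · rw [hx.wordPrefix_shift_eq k] at hX
        simpa [b, flattenPrefix_succ] using hX
      · obtain ⟨i, -, hi⟩ := hXc () hc
        have : k ≤ b k := le_length_flattenPrefix (fun k => (W k).2.1) k
        exact hn₀ _ (by omega) hi
    choose X hX hXsafe using hblock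
    refine ⟨fun k => ⟨⟨_, hstate k⟩, W k, X k, ⟨_, hstate (k + 1)⟩⟩,
      ⟨?_, fun k => ⟨hX k, rfl, rfl⟩⟩, mem_genCoBuchi_unit.2 ⟨n₀, hXsafe⟩⟩
    exact Subtype.ext (by simpa [b, flattenPrefix] using hρ.1)

lemma localAut_langFrom_eq (hsdet : M.SafeDeterministic) (s s' : (localAut M R q0).Q) :
    (localAut M R q0).LangFrom s = (localAut M R q0).LangFrom s' := by
  ext W
  obtain ⟨x, hx⟩ := exists_isFlatten (u := fun k => (W k).1) fun k => (W k).2.1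
  rw [langFrom_localAut_iff q0 hacc hsd hsdet hx, langFrom_localAut_iff q0 hacc hsd hsdet hx]

lemma safeLang_subset_of_localAut (hsdet : M.SafeDeterministic) (hnf : M.NormalForm)
    {s s' : (localAut M R q0).Q}
    (h : (localAut M R q0).SafeLang s ⊆ (localAut M R q0).SafeLang s') :
    M.SafeLang s.1 ⊆ M.SafeLang s'.1 := by
  intro w hw
  refine (mem_safeLang_iff hsdet).2 fun n => ?_
  obtain ⟨x, hx⟩ := safeReadable_of_mem_safeLang hw n
  obtain ⟨v, hv⟩ := reflTransGen_safeStep_iff.1 (hx.safeConn hnf (Set.notMem_empty _)).2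
  have hcycle : PathCol M s.1 (wordPrefix w n ++ v) ∅ s.1 := by simpa using hx.append hv
  obtain ⟨bl, hbl, hcycle'⟩ := hcycle.exists_localAut q0 hacc hsd (s := s) (s' := s)
  rcases eq_or_ne bl [] with rfl | hne
  · simp only [List.map_nil, List.flatten_nil] at hbl
    obtain ⟨hw, -⟩ := List.append_eq_nil_iff.1 hbl.symm
    exact ⟨s'.1, hw ▸ .nil _⟩
  obtain ⟨W, hW, hWpre⟩ :=
    exists_mem_safeLang_of_cycle (localAut_safeDeterministic q0 hsdet) hcycle' hne
  obtain ⟨s'', hs''⟩ := safeReadable_of_mem_safeLang (h hW) bl.length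
  rw [hWpre] at hs''
  exact SafeReadable.of_prefix ⟨s''.1, hbl ▸ hs''.flatten_of_localAut⟩ (List.prefix_append _ _)

lemma localAut_safeMinimal (hsdet : M.SafeDeterministic) (hnf : M.NormalForm)
    (hsm : M.SafeMinimal) : (localAut M R q0).SafeMinimal := fun s s' _ h =>
  Subtype.ext <| hsm _ _ (s.2.trans s'.2.symm)
    ((safeLang_subset_of_localAut q0 hacc hsd hsdet hnf h.le).antisymm
      (safeLang_subset_of_localAut q0 hacc hsd hsdet hnf h.ge))

lemma localAut_safeCentralised (hsdet : M.SafeDeterministic) (hnf : M.NormalForm)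
    (hsc : M.SafeCentralised) : (localAut M R q0).SafeCentralised := fun s s' _ h =>
  localAut_safeConn_of_safeConn q0 hacc hsd <| hsc _ _ (s.2.trans s'.2.symm) <|
    h.imp (safeLang_subset_of_localAut q0 hacc hsd hsdet hnf)
      (safeLang_subset_of_localAut q0 hacc hsd hsdet hnf)

end Localisation

section EquivalentStates

variable {A : Type} {M : Automaton A (Set Unit)} (hacc : M.acc = genCoBuchi Unit)
  (hsd : M.SemanticallyDeterministic) (hnf : M.NormalForm) (hsdet : M.SafeDeterministic)

include hacc hsd hnf hsdet in
lemma exists_safe_pathCol_not_safeReadable {p qq : M.Q}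
    (H : ∀ y z, M.Reach p y → M.SafeConn z qq → M.LangFrom y = M.LangFrom z →
      ¬ M.SafeLang z ⊆ M.SafeLang y)
    (T : Finset M.Q) (z : M.Q) (hz : M.SafeConn z qq)
    (hT : ∀ y ∈ T, M.Reach p y ∧ M.LangFrom y = M.LangFrom z) :
    ∃ g z', PathCol M z g ∅ z' ∧ M.SafeConn z' qq ∧ ∀ y ∈ T, ¬ M.SafeReadable y g := by
  classical
  generalize hn : T.card = n
  induction n using Nat.strong_induction_on generalizing T z with
  | _ n ih =>
    rcases T.eq_empty_or_nonempty with rfl | ⟨y, hy⟩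
    · exact ⟨[], z, .nil z, hz, by simp⟩
    obtain ⟨ζ, hζz, hζy⟩ := Set.not_subset.1 (H y z (hT y hy).1 hz (hT y hy).2)
    obtain ⟨m, hm⟩ : ∃ m, ¬ M.SafeReadable y (wordPrefix ζ m) := by
      by_contra! h
      exact hζy ((mem_safeLang_iff hsdet).2 h)
    set f := wordPrefix ζ m
    obtain ⟨z₁, hz₁⟩ := safeReadable_of_mem_safeLang hζz m
    have hz₁qq : M.SafeConn z₁ qq := (hz₁.safeConn hnf (Set.notMem_empty _)).symm.trans hz
    have hend : ∀ y', ∃ e, M.SafeReadable y' f → PathCol M y' f ∅ e := fun y' =>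
      (em (M.SafeReadable y' f)).elim (fun ⟨e, he⟩ => ⟨e, fun _ => he⟩)
        fun h => ⟨y', (absurd · h)⟩
    choose e he using hend
    set T' := (T.filter fun y' => M.SafeReadable y' f).image e
    have hcard : T'.card < n := calc
      T'.card ≤ (T.filter fun y' => M.SafeReadable y' f).card := Finset.card_image_le
      _ < T.card := Finset.card_lt_card (Finset.filter_ssubset.2 ⟨y, hy, hm⟩)
      _ = n := hn
    have hT' : ∀ y' ∈ T', M.Reach p y' ∧ M.LangFrom y' = M.LangFrom z₁ := by
      simp only [T', Finset.mem_image, Finset.mem_filter]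
      rintro _ ⟨y', ⟨hy'T, hy'f⟩, rfl⟩
      have hpath := he y' hy'f
      refine ⟨(hT y' hy'T).1.trans hpath.reach, ?_⟩
      rw [hpath.langFrom_eq hacc hsd, hz₁.langFrom_eq hacc hsd, (hT y' hy'T).2]
    obtain ⟨g, z', hg, hz', hkill⟩ := ih _ hcard T' z₁ hz₁qq hT' rfl
    refine ⟨f ++ g, z', by simpa using hz₁.append hg, hz', fun y' hy' ⟨x, hx⟩ => ?_⟩
    obtain ⟨r, hr, hrg⟩ := pathCol_append_empty_iff.1 hx
    have hy'f : M.SafeReadable y' f := ⟨r, hr⟩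
    obtain rfl := hr.dst_eq_of_safe hsdet (he y' hy'f)
    exact hkill _ (Finset.mem_image.2 ⟨y', Finset.mem_filter.2 ⟨hy', hy'f⟩, rfl⟩) ⟨x, hrg⟩

include hacc hsd hnf hsdet in
lemma exists_nonempty_safe_pathCol_not_safeReadable {p qq : M.Q}
    (H : ∀ y z, M.Reach p y → M.SafeConn z qq → M.LangFrom y = M.LangFrom z →
      ¬ M.SafeLang z ⊆ M.SafeLang y)
    {ζ : ℕ → A} (hζ : ζ ∈ M.SafeLang qq) (z : M.Q) (hz : M.SafeConn z qq) :
    ∃ v z', v ≠ [] ∧ PathCol M z v ∅ z' ∧ M.SafeConn z' qq ∧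
      ∀ y, M.Reach p y → M.LangFrom y = M.LangFrom z → ¬ M.SafeReadable y v := by
  classical
  let _ : Fintype M.Q := M.fin
  obtain ⟨g, z', hg, hz', hkill⟩ := exists_safe_pathCol_not_safeReadable hacc hsd hnf hsdet H
    (Finset.univ.filter fun y => M.Reach p y ∧ M.LangFrom y = M.LangFrom z) z hz
    fun y hy => (Finset.mem_filter.1 hy).2
  obtain ⟨g', hg'⟩ := reflTransGen_safeStep_iff.1 hz'.1
  obtain ⟨z'', hz''⟩ := safeReadable_of_mem_safeLang hζ 1
  refine ⟨g ++ (g' ++ wordPrefix ζ 1), z'', List.ne_nil_of_length_pos (by simp),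
    by simpa using hg.append (hg'.append hz''), (hz''.safeConn hnf (Set.notMem_empty _)).symm,
    fun y hy hyz hread => ?_⟩
  exact hkill y (by simp [hy, hyz]) (hread.of_prefix (List.prefix_append _ _))

include hacc hsd hnf hsdet in
lemma exists_reach_safeLang_subset {p qq : M.Q} (hL : M.LangFrom p = M.LangFrom qq)
    (hqq : (M.SafeLang qq).Nonempty) :
    ∃ y z, M.Reach p y ∧ M.SafeConn z qq ∧ M.LangFrom y = M.LangFrom z ∧
      M.SafeLang z ⊆ M.SafeLang y := by
  by_contra! H
  obtain ⟨ζ, hζ⟩ := hqq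
  have stage : ∀ z : {z // M.SafeConn z qq}, ∃ (v : List A) (z' : {z // M.SafeConn z qq}),
      v ≠ [] ∧ PathCol M z.1 v ∅ z'.1 ∧
        ∀ y, M.Reach p y → M.LangFrom y = M.LangFrom z.1 → ¬ M.SafeReadable y v :=
    fun ⟨z, hz⟩ =>
      let ⟨v, z', hv, hpath, hz', hkill⟩ :=
        exists_nonempty_safe_pathCol_not_safeReadable hacc hsd hnf hsdet H hζ z hz
      ⟨v, ⟨z', hz'⟩, hv, hpath, hkill⟩
  choose v next hv hpath hkill using stage
  let Z : ℕ → {z // M.SafeConn z qq} := fun k => next^[k] ⟨qq, SafeConn.refl qq⟩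
  let u : ℕ → List A := fun k => v (Z k)
  have hZ : ∀ k, PathCol M qq (flattenPrefix u k) ∅ (Z k).1 := by
    intro k
    induction k with
    | zero => exact .nil qq
    | succ k ih =>
      simpa [flattenPrefix_succ, Z, Function.iterate_succ_apply'] using ih.append (hpath (Z k))
  obtain ⟨x, hx⟩ := exists_isFlatten (u := u) fun k => hv (Z k)
  have hxp : x ∈ M.LangFrom p := hL ▸ safeLang_subset_langFrom hacc qq
    (hx.mem_safeLang hsdet (fun k => hv (Z k)) fun k => ⟨_, hZ k⟩)
  obtain ⟨ρ, hρ, hρacc⟩ := hxp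
  obtain ⟨n₀, hn₀⟩ := mem_genCoBuchi_unit.1 (hacc ▸ hρacc)
  have hb : n₀ ≤ (flattenPrefix u n₀).length := le_length_flattenPrefix (fun k => hv (Z k)) n₀
  have hsafe : (fun i => x ((flattenPrefix u n₀).length + i)) ∈
      M.SafeLang (ρ (flattenPrefix u n₀).length).src :=
    ⟨_, hρ.shift _, fun i => hn₀ _ (by omega)⟩
  have hread := safeReadable_of_mem_safeLang hsafe (u n₀).length
  rw [hx.wordPrefix_shift_eq n₀] at hread
  refine hkill (Z n₀) _ ?_ ?_ hread
  · obtain ⟨X, hX, -⟩ := hρ.exists_pathCol (flattenPrefix u n₀).length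
    exact hX.reach
  · rw [hρ.langFrom_src hacc hsd, hx.wordPrefix_eq, hL, (hZ n₀).langFrom_eq hacc hsd]

include hacc hsd hnf hsdet in
lemma reach_of_langFrom_eq (hsc : M.SafeCentralised) {p q : M.Q}
    (h : M.LangFrom p = M.LangFrom q) : M.Reach p q := by
  rcases (M.SafeLang q).eq_empty_or_nonempty with hq | hq
  · exact (hsc p q h (Or.inr (hq ▸ Set.empty_subset _))).reach
  · obtain ⟨y, z, hy, hz, hyz, hsub⟩ := exists_reach_safeLang_subset hacc hsd hnf hsdet h hq
    exact hy.trans ((hsc y z hyz (Or.inr hsub)).reach.trans hz.reach)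

include hacc hsd hnf hsdet in
lemma localAut_nice (hsc : M.SafeCentralised) {R : Set (ℕ → A)}
    (q0 : {q : M.Q // M.LangFrom q = R}) : (localAut M R q0).Nice :=
  ⟨fun s => localAut_reach_of_reach q0 hacc hsd
      (reach_of_langFrom_eq hacc hsd hnf hsdet hsc (q0.2.trans s.2.symm)),
    fun t _ t' _ _ _ => localAut_langFrom_eq q0 hacc hsd hsdet t.dst t'.dst,
    localAut_normalForm q0 hacc hsd hnf, localAut_safeDeterministic q0 hsdet⟩

end EquivalentStates

section Transient

variable {A : Type} {M : Automaton A (Set Unit)} (hacc : M.acc = genCoBuchi Unit)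
  (hsd : M.SemanticallyDeterministic)
include hacc hsd

lemma exists_langFrom_eq_residualLang (hhd : M.HistoryDeterministic) (u : List A) :
    ∃ q, M.LangFrom q = residualLang u M.Lang := by
  rcases isEmpty_or_nonempty A with hA | ⟨⟨a⟩⟩
  · exact ⟨M.init, Set.ext fun w => isEmptyElim (w 0)⟩
  obtain ⟨r, hr⟩ := hhd
  refine ⟨(M.resRun r (wordAppend u fun _ => a) u.length).src, ?_⟩
  rw [(hr _).1.langFrom_src hacc hsd, wordPrefix_wordAppend]
  rfl

lemma safeLang_eq_empty_of_localAlphabet_eq_empty (hnf : M.NormalForm) {R : Set (ℕ → A)}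
    (hR : localAlphabet R = ∅) {q : M.Q} (hq : M.LangFrom q = R) : M.SafeLang q = ∅ := by
  refine Set.eq_empty_of_forall_notMem fun w ⟨ρ, hρ, hsafe⟩ => ?_
  obtain ⟨hmem, -, -⟩ := hρ.2 0
  obtain ⟨v, hv⟩ := reflTransGen_safeStep_iff.1 (hnf _ hmem (hsafe 0)).2
  have hcycle := PathCol.cons (ρ 0) hmem rfl rfl hv
  rw [eq_empty_of_unit_notMem (hsafe 0), Set.union_empty, hρ.1] at hcycle
  have hres : residualLang ((ρ 0).lab :: v) R = R := by
    have := hcycle.langFrom_eq hacc hsd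
    rw [hq] at this
    exact this.symm
  simpa [hR] using localAlphabet_nonempty_of_residualLang (List.cons_ne_nil _ _) hres

end Transient

/-- for a nice, safe minimal and safe centralised HD coBüchi
automaton `A` recognising `L`: if `R` is a recurrent residual of `L` then the
localisation `A|_R` (with any initial state) is nice, safe minimal and safe
centralised; if `R` is a transient residual (`Σ_R = ∅`) then exactly one state
of `A` recognises `R`. -/
theorem stmt_11 {A : Type} (L : Set (ℕ → A))
    (M : Automaton A (Set Unit)) (hacc : M.acc = genCoBuchi Unit)
    (hnice : M.Nice) (hsm : M.SafeMinimal) (hsc : M.SafeCentralised)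
    (hhd : M.HistoryDeterministic) (hlang : M.Lang = L)
    (R : Set (ℕ → A)) (hres : ∃ u : List A, residualLang u L = R) :
    ((localAlphabet R).Nonempty →
      ∀ q0 : {q : M.Q // M.LangFrom q = R},
        (localAut M R q0).Nice ∧ (localAut M R q0).SafeMinimal ∧
          (localAut M R q0).SafeCentralised) ∧
    (localAlphabet R = ∅ → ∃! q : M.Q, M.LangFrom q = R) := by
  obtain ⟨-, hsd, hnf, hsdet⟩ := hnice
  refine ⟨fun _ q0 => ⟨localAut_nice hacc hsd hnf hsdet hsc q0,
    localAut_safeMinimal q0 hacc hsd hsdet hnf hsm,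
    localAut_safeCentralised q0 hacc hsd hsdet hnf hsc⟩, fun hR => ?_⟩
  obtain ⟨u, rfl⟩ := hres
  obtain ⟨q, hq⟩ := exists_langFrom_eq_residualLang hacc hsd hhd u
  rw [hlang] at hq
  refine ⟨q, hq, fun y hy => hsm y q (hy.trans hq.symm) ?_⟩
  rw [safeLang_eq_empty_of_localAlphabet_eq_empty hacc hsd hnf hR hy,
    safeLang_eq_empty_of_localAlphabet_eq_empty hacc hsd hnf hR hq]
end

section
/- Let G = (V,E) be a finite simple graph containing no 4-clique. Define the graph G̃ with vertex set V×{0,1,2} and edge set consisting of {(v,0),(v',0)} for every {v,v'} ∈ E, together with {(v,i),(v,j)} for every v ∈ V and every i ≠ j ∈ {0,1,2}. Then G̃ is triangle-full and 4-clique-free, and G admits a proper 3-colouring if and only if G̃ admits a proper 3-colouring. -/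
/-- for a 4-clique-free finite simple graph `G`, the graph `G̃`
on `V × {0,1,2}` (edges: `{(v,0),(v',0)}` for `{v,v'} ∈ E`, and `{(v,i),(v,j)}`
for `i ≠ j`) is triangle-full and 4-clique-free, and `G` is 3-colourable iff
`G̃` is. -/
theorem stmt_13 {V : Type} [Fintype V] [DecidableEq V] (G : SimpleGraph V)
    (h4 : ¬ ∃ s : Finset V, G.IsNClique 4 s) :
    let Gt : SimpleGraph (V × Fin 3) := SimpleGraph.fromRel
      (fun x y => (x.2 = 0 ∧ y.2 = 0 ∧ G.Adj x.1 y.1) ∨ (x.1 = y.1 ∧ x.2 ≠ y.2))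
    (∀ x : V × Fin 3, ∃ s : Finset (V × Fin 3), Gt.IsNClique 3 s ∧ x ∈ s) ∧
    (¬ ∃ s : Finset (V × Fin 3), Gt.IsNClique 4 s) ∧
    ((∃ c : V → Fin 3, ∀ u v : V, G.Adj u v → c u ≠ c v) ↔
      (∃ c : V × Fin 3 → Fin 3, ∀ x y : V × Fin 3, Gt.Adj x y → c x ≠ c y)) := by
  intro Gt
  have hadj : ∀ x y : V × Fin 3, Gt.Adj x y ↔ x ≠ y ∧
      ((x.2 = 0 ∧ y.2 = 0 ∧ G.Adj x.1 y.1) ∨ (x.1 = y.1 ∧ x.2 ≠ y.2) ∨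
       (y.2 = 0 ∧ x.2 = 0 ∧ G.Adj y.1 x.1) ∨ (y.1 = x.1 ∧ y.2 ≠ x.2)) := by
    intro x y
    show (SimpleGraph.fromRel _).Adj x y ↔ _
    rw [SimpleGraph.fromRel_adj]
    tauto
  refine ⟨?_, ?_, ?_⟩
  · rintro ⟨v, i⟩
    refine ⟨{(v,0),(v,1),(v,2)}, ⟨?_, ?_⟩, ?_⟩
    · intro a ha b hb hne
      simp only [Finset.coe_insert, Set.mem_insert_iff, Finset.coe_singleton,
        Set.mem_singleton_iff] at ha hb
      rw [hadj]
      refine ⟨hne, Or.inr (Or.inl ⟨?_, ?_⟩)⟩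
      · rcases ha with rfl|rfl|rfl <;> rcases hb with rfl|rfl|rfl <;> rfl
      · rcases ha with rfl|rfl|rfl <;> rcases hb with rfl|rfl|rfl <;>
          simp_all <;> decide
    · have h01 : ((v,0) : V × Fin 3) ∉ ({(v,1),(v,2)} : Finset (V × Fin 3)) := by
        simp [Prod.ext_iff]
      have h12 : ((v,1) : V × Fin 3) ∉ ({(v,2)} : Finset (V × Fin 3)) := by
        simp [Prod.ext_iff]
      rw [Finset.card_insert_of_notMem h01, Finset.card_insert_of_notMem h12,
        Finset.card_singleton]
    · have hi : i = 0 ∨ i = 1 ∨ i = 2 := by omega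
      rcases hi with rfl|rfl|rfl <;> simp
  · rintro ⟨s, hs⟩
    by_cases hx : ∃ x ∈ s, x.2 ≠ 0
    · obtain ⟨x, hxs, hx2⟩ := hx
      have hsub : s ⊆ Finset.univ.image (fun i : Fin 3 => (x.1, i)) := by
        intro y hys
        rcases eq_or_ne y x with rfl | hne
        · simp
        · have h := hs.1 (Finset.mem_coe.mpr hys) (Finset.mem_coe.mpr hxs) hne
          rw [hadj] at h
          obtain ⟨-, h⟩ := h
          have : y.1 = x.1 := by
            rcases h with ⟨_,h2,_⟩|⟨h1,_⟩|⟨h2,_,_⟩|⟨h1,_⟩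
            · exact absurd h2 hx2
            · exact h1
            · exact absurd h2 hx2
            · exact h1.symm
          simp [Finset.mem_image]
          exact ⟨y.2, by rw [← this]⟩
      have h1 := Finset.card_le_card hsub
      have h2 := Finset.card_image_le (f := fun i : Fin 3 => (x.1, i)) (s := Finset.univ)
      have h3 : (Finset.univ : Finset (Fin 3)).card = 3 := by decide
      have h4' := hs.2
      omega
    · push_neg at hx
      apply h4
      refine ⟨s.image Prod.fst, ?_, ?_⟩
      · intro u hu v hv hne
        simp only [Finset.coe_image, Set.mem_image, Finset.mem_coe] at hu hv
        obtain ⟨a, has, rfl⟩ := hu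
        obtain ⟨b, hbs, rfl⟩ := hv
        have hab : a ≠ b := fun h => hne (by rw [h])
        have h := hs.1 (Finset.mem_coe.mpr has) (Finset.mem_coe.mpr hbs) hab
        rw [hadj] at h
        obtain ⟨-, h⟩ := h
        rcases h with ⟨_,_,h3⟩|⟨h1,_⟩|⟨_,_,h3⟩|⟨h1,_⟩
        · exact h3
        · exact absurd h1 hne
        · exact h3.symm
        · exact absurd h1.symm hne
      · rw [Finset.card_image_of_injOn, hs.2]
        intro a has b hbs hab
        exact Prod.ext hab (by rw [hx a has, hx b hbs])
  · constructor
    · rintro ⟨c, hc⟩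
      refine ⟨fun x => c x.1 + x.2, ?_⟩
      intro x y hxy
      rw [hadj] at hxy
      obtain ⟨hne, h⟩ := hxy
      show c x.1 + x.2 ≠ c y.1 + y.2
      rcases h with ⟨h1,h2,h3⟩|⟨h1,h2⟩|⟨h1,h2,h3⟩|⟨h1,h2⟩
      · rw [h1, h2]; simpa using hc _ _ h3
      · rw [h1]; exact fun h => h2 (add_left_cancel h)
      · rw [h1, h2]; simpa using (hc _ _ h3).symm
      · rw [h1]; exact fun h => h2 (add_left_cancel h).symm
    · rintro ⟨c, hc⟩
      refine ⟨fun v => c (v, 0), ?_⟩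
      intro u v huv
      apply hc
      rw [hadj]
      exact ⟨fun h => huv.ne (congrArg Prod.fst h), Or.inl ⟨rfl, rfl, huv⟩⟩
end

section
/- Let G = (V,E) be a finite simple graph and k ≥ 1. If G admits a proper k-colouring, then there exists a complete deterministic generalised Büchi automaton with exactly k states over the alphabet V that recognises L_G. -/
/-- if a finite simple graph `G` admits a proper `k`-colouring
(`k ≥ 1`), then there is a complete deterministic generalised Büchi automaton
with exactly `k` states over the alphabet `V` recognising `L_G`. -/
theorem stmt_14 {V : Type} [Fintype V] (G : SimpleGraph V) (k : ℕ) (hk : 1 ≤ k)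
    (hcol : ∃ c : V → Fin k, ∀ u v : V, G.Adj u v → c u ≠ c v) :
    ∃ (C : Type) (_ : Fintype C) (B : Automaton V (Set C)),
      B.acc = genBuchi C ∧ B.size = k ∧ B.Deterministic ∧ B.Complete ∧
      B.Lang = LG G := by
  classical
  obtain ⟨c, hc⟩ := hcol
  refine ⟨V, inferInstance,
    { Q := Fin k
      fin := inferInstance
      init := ⟨0, hk⟩
      delta := {t | t.dst = c t.lab ∧
        t.out = {v | (t.lab ≠ v ∧ ¬ G.Adj v t.lab) ∨ (t.lab = v ∧ t.src = c v)}}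
      acc := genBuchi V }, rfl, ?_, ?_, ?_, ?_⟩
  · simp [Automaton.size]
  · rintro ⟨s1, l1, o1, d1⟩ ⟨h1, h1'⟩ ⟨s2, l2, o2, d2⟩ ⟨h2, h2'⟩ hs hl
    simp only at hs hl h1 h1' h2 h2'
    subst hs hl h1 h2 h1' h2'
    rfl
  · intro p a
    exact ⟨⟨p, a, {v | (a ≠ v ∧ ¬ G.Adj v a) ∨ (a = v ∧ p = c v)}, c a⟩,
      ⟨rfl, rfl⟩, rfl, rfl⟩
  · ext w
    constructor
    · rintro ⟨ρ, ⟨h0, hstep⟩, hacc⟩ v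
      by_contra hcon
      push_neg at hcon
      obtain ⟨⟨n1, hn1⟩, ⟨n2, hn2⟩⟩ := hcon
      obtain ⟨m, hm, hv⟩ := hacc v (max n1 n2 + 1)
      obtain ⟨m', rfl⟩ : ∃ m', m = m' + 1 :=
        ⟨m - 1, (Nat.succ_pred_eq_of_pos (lt_of_lt_of_le (Nat.succ_pos _) hm)).symm⟩
      have hmax := Nat.le_of_succ_le_succ hm
      have hm1' : n1 ≤ m' := le_trans (le_max_left n1 n2) hmax
      have hm2' : n2 ≤ m' := le_trans (le_max_right n1 n2) hmax
      have hout : (ρ (m' + 1)).out =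
          {v | ((ρ (m'+1)).lab ≠ v ∧ ¬ G.Adj v (ρ (m'+1)).lab) ∨
            ((ρ (m'+1)).lab = v ∧ (ρ (m'+1)).src = c v)} := (hstep (m'+1)).1.2
      have hlab : ∀ n, (ρ n).lab = w n := fun n => (hstep n).2.1
      have hsrc : (ρ (m'+1)).src = c (w m') := by
        have h1 := (hstep m').2.2
        have h2 := (hstep m').1.1
        rw [← h1, h2, hlab]
      replace hv : v ∈ (ρ (m' + 1)).out := hv
      rw [hout] at hv
      rcases hv with ⟨hne, hadj⟩ | ⟨heq, hq⟩
      · rw [hlab] at hne hadj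
        exact hadj (hn2 (m'+1) (le_trans hm2' (Nat.le_succ _)) hne)
      · rw [hlab] at heq
        rw [hsrc] at hq
        by_cases hveq : w m' = v
        · exact hn1 m' hm1' hveq heq
        · exact hc v (w m') (hn2 m' hm2' hveq) hq.symm
    · intro hw
      refine ⟨fun n => ⟨Nat.casesOn n (⟨0, hk⟩ : Fin k) (fun m => c (w m)), w n,
        {v | (w n ≠ v ∧ ¬ G.Adj v (w n)) ∨
          (w n = v ∧ (Nat.casesOn n (⟨0, hk⟩ : Fin k) fun m => c (w m)) = c v)},
        c (w n)⟩, ⟨rfl, fun n => ⟨⟨rfl, rfl⟩, rfl, rfl⟩⟩, ?_⟩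
      intro v n
      rcases hw v with h | h
      · obtain ⟨m, hm, h1, h2⟩ := h n
        exact ⟨m + 1, le_trans hm (Nat.le_succ m), Or.inr ⟨h2, by show c (w m) = c v; rw [h1]⟩⟩
      · obtain ⟨m, hm, h1, h2⟩ := h n
        exact ⟨m, hm, Or.inl ⟨h1, h2⟩⟩
end

section
/- Let A be a resolver-trim history-deterministic generalised Büchi automaton with n_A states, and suppose there exists a deterministic Büchi automaton B with n_B states such that L(B) = L(A). Then there exist a colour set C' with |C'| ≤ n_A·n_B and a colouring col' : Δ_A → 𝒫(C') such that the automaton A' obtained from A by replacing its colouring with col' and its acceptance condition with genBuchi(C') satisfies L(A') = L(A) and A' is a resolver-trim history-deterministic generalised Büchi automaton (with the same n_A states and transitions as A). -/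
namespace Stmt16

/-- splice index: prefix from run 1 up to `a₁+L₁`, then alternating segments
`[a₂, a₂+L₂)` of run 2 and `[a₁, a₁+L₁)` of run 1. -/
def spIdx (a₁ L₁ a₂ L₂ n : ℕ) : ℕ ⊕ ℕ :=
  if n < a₁ + L₁ then Sum.inl n
  else if (n - (a₁ + L₁)) % (L₂ + L₁) < L₂ then
    Sum.inr (a₂ + (n - (a₁ + L₁)) % (L₂ + L₁))
  else Sum.inl (a₁ + ((n - (a₁ + L₁)) % (L₂ + L₁) - L₂))

lemma spIdx_lt {a₁ L₁ a₂ L₂ n : ℕ} (h : n < a₁ + L₁) :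
    spIdx a₁ L₁ a₂ L₂ n = Sum.inl n := if_pos h

lemma spIdx_per {a₁ L₁ a₂ L₂ : ℕ} (j r : ℕ) (hr : r < L₂ + L₁) :
    spIdx a₁ L₁ a₂ L₂ (a₁ + L₁ + (j * (L₂ + L₁) + r)) =
      if r < L₂ then Sum.inr (a₂ + r) else Sum.inl (a₁ + (r - L₂)) := by
  unfold spIdx
  have h1 : ¬ (a₁ + L₁ + (j * (L₂ + L₁) + r) < a₁ + L₁) := by omega
  have h2 : a₁ + L₁ + (j * (L₂ + L₁) + r) - (a₁ + L₁) = j * (L₂ + L₁) + r := by omega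
  have h3 : (j * (L₂ + L₁) + r) % (L₂ + L₁) = r := by
    rw [add_comm, Nat.add_mul_mod_self_right, Nat.mod_eq_of_lt hr]
  rw [if_neg h1, h2, h3]

lemma spIdx_ge {a₁ L₁ a₂ L₂ n : ℕ} (h : a₁ + L₁ ≤ n) :
    (∃ m, a₂ ≤ m ∧ spIdx a₁ L₁ a₂ L₂ n = Sum.inr m) ∨
    (∃ m, a₁ ≤ m ∧ spIdx a₁ L₁ a₂ L₂ n = Sum.inl m) := by
  unfold spIdx
  rw [if_neg (by omega)]
  split
  · exact Or.inl ⟨_, Nat.le_add_right _ _, rfl⟩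
  · exact Or.inr ⟨_, Nat.le_add_right _ _, rfl⟩

lemma spl_occ₂ {a₁ L₁ a₂ L₂ : ℕ} {r : ℕ} (hr : r < L₂) (n₀ : ℕ) :
    ∃ n, n₀ ≤ n ∧ spIdx a₁ L₁ a₂ L₂ n = Sum.inr (a₂ + r) := by
  have hle : n₀ ≤ n₀ * (L₂ + L₁) := Nat.le_mul_of_pos_right n₀ (by omega)
  refine ⟨a₁ + L₁ + (n₀ * (L₂ + L₁) + r), by omega, ?_⟩
  rw [spIdx_per n₀ r (by omega), if_pos hr]

lemma spl_occ₁ {a₁ L₁ a₂ L₂ : ℕ} {r : ℕ} (hr : r < L₁) (n₀ : ℕ) :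
    ∃ n, n₀ ≤ n ∧ spIdx a₁ L₁ a₂ L₂ n = Sum.inl (a₁ + r) := by
  have hle : n₀ ≤ n₀ * (L₂ + L₁) := Nat.le_mul_of_pos_right n₀ (by omega)
  refine ⟨a₁ + L₁ + (n₀ * (L₂ + L₁) + (L₂ + r)), by omega, ?_⟩
  rw [spIdx_per n₀ (L₂ + r) (by omega), if_neg (by omega)]
  congr 2
  omega

lemma spl_chain {T X : Type} (fsrc fdst : T → X) (f₁ f₂ : ℕ → T)
    (C₁ : ∀ n, fdst (f₁ n) = fsrc (f₁ (n + 1))) (C₂ : ∀ n, fdst (f₂ n) = fsrc (f₂ (n + 1)))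
    {a₁ L₁ a₂ L₂ : ℕ} (hL₁ : 0 < L₁) (hL₂ : 0 < L₂)
    (E₀ : fsrc (f₁ (a₁ + L₁)) = fsrc (f₂ a₂)) (E₁ : fsrc (f₂ (a₂ + L₂)) = fsrc (f₁ a₁)) (n : ℕ) :
    fdst (Sum.elim f₁ f₂ (spIdx a₁ L₁ a₂ L₂ n)) =
      fsrc (Sum.elim f₁ f₂ (spIdx a₁ L₁ a₂ L₂ (n + 1))) := by
  rcases lt_trichotomy (n + 1) (a₁ + L₁) with h | h | h
  · rw [spIdx_lt (by omega : n < a₁ + L₁), spIdx_lt h]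
    exact C₁ n
  · have h2 : n + 1 = a₁ + L₁ + (0 * (L₂ + L₁) + 0) := by omega
    rw [spIdx_lt (by omega : n < a₁ + L₁), h2, spIdx_per 0 0 (by omega), if_pos hL₂]
    simp only [Sum.elim_inl, Sum.elim_inr]
    have hc := C₁ n
    have h3 : n + 1 = a₁ + L₁ := by omega
    rw [h3] at hc
    rw [hc, E₀, Nat.add_zero]
  · have hP : a₁ + L₁ ≤ n := by omega
    have hj := Nat.div_add_mod (n - (a₁ + L₁)) (L₂ + L₁)
    set k := (n - (a₁ + L₁)) % (L₂ + L₁) with hkdef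
    have hkl : k < L₂ + L₁ := Nat.mod_lt _ (by omega)
    set j := (n - (a₁ + L₁)) / (L₂ + L₁) with hjdef
    have hn : n = a₁ + L₁ + (j * (L₂ + L₁) + k) := by rw [mul_comm]; omega
    rcases lt_or_eq_of_le (Nat.succ_le_of_lt hkl) with hk1 | hk1
    · -- k+1 < L₂+L₁
      have hn1 : n + 1 = a₁ + L₁ + (j * (L₂ + L₁) + (k + 1)) := by rw [mul_comm]; omega
      rw [hn1, spIdx_per j (k + 1) hk1, hn, spIdx_per j k hkl]
      rcases lt_trichotomy (k + 1) L₂ with hc | hc | hc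
      · rw [if_pos (by omega), if_pos hc]
        simp only [Sum.elim_inr]
        have : a₂ + (k + 1) = (a₂ + k) + 1 := by omega
        rw [this]
        exact C₂ (a₂ + k)
      · rw [if_pos (by omega), if_neg (by omega)]
        simp only [Sum.elim_inr, Sum.elim_inl]
        have h4 : a₁ + (k + 1 - L₂) = a₁ := by omega
        have h5 := C₂ (a₂ + k)
        have h6 : a₂ + k + 1 = a₂ + L₂ := by omega
        rw [h6] at h5
        rw [h4, h5, E₁]
      · rw [if_neg (by omega), if_neg (by omega)]
        simp only [Sum.elim_inl]
        have h4 : a₁ + (k + 1 - L₂) = (a₁ + (k - L₂)) + 1 := by omega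
        rw [h4]
        exact C₁ (a₁ + (k - L₂))
    · -- k + 1 = L₂ + L₁  (wrap around)
      have hn1 : n + 1 = a₁ + L₁ + ((j + 1) * (L₂ + L₁) + 0) := by
        have hmul : (j + 1) * (L₂ + L₁) = (L₂ + L₁) * j + (L₂ + L₁) := by ring
        omega
      rw [hn1, spIdx_per (j + 1) 0 (by omega), hn, spIdx_per j k hkl,
        if_neg (by omega), if_pos hL₂]
      simp only [Sum.elim_inl, Sum.elim_inr]
      have h4 : a₁ + (k - L₂) + 1 = a₁ + L₁ := by omega
      have h5 := C₁ (a₁ + (k - L₂))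
      rw [h4] at h5
      rw [h5, E₀, Nat.add_zero]

lemma det_agree {A Γ : Type} {B : Automaton A Γ} (hdet : B.Deterministic)
    {q : B.Q} {w w' : ℕ → A} {π π' : ℕ → AutTrans B.Q A Γ}
    (h : B.IsRunFrom q w π) (h' : B.IsRunFrom q w' π')
    {m : ℕ} (hw : ∀ i < m, w i = w' i) : ∀ n < m, π n = π' n := by
  intro n
  induction n with
  | zero =>
    intro h0
    exact hdet _ (h.2 0).1 _ (h'.2 0).1 (h.1.trans h'.1.symm)
      (by rw [(h.2 0).2.1, (h'.2 0).2.1]; exact hw 0 h0)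
  | succ n ih =>
    intro hs
    have hn := ih (by omega)
    exact hdet _ (h.2 (n + 1)).1 _ (h'.2 (n + 1)).1
      (by rw [← (h.2 n).2.2, ← (h'.2 n).2.2, hn])
      (by rw [(h.2 (n + 1)).2.1, (h'.2 (n + 1)).2.1]; exact hw _ hs)

lemma exists_io {F : Type} [Fintype F] (f : ℕ → F) :
    ∃ x : F, ∀ n, ∃ m, n ≤ m ∧ f m = x := by
  by_contra h
  push_neg at h
  choose nf hnf using h
  exact hnf (f (Finset.univ.sup nf)) (Finset.univ.sup nf)
    (Finset.le_sup (Finset.mem_univ _)) rfl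

lemma dead_prefix {A Γ : Type} {B : Automaton A Γ} (hdet : B.Deterministic)
    {w : ℕ → A} (hno : ¬ ∃ π, B.IsRunFrom B.init w π) :
    ∃ m₀ : ℕ, ∀ w' : ℕ → A, (∀ i < m₀, w' i = w i) → w' ∉ B.Lang := by
  by_contra h
  push_neg at h
  choose W hW hWL using h
  have hrun : ∀ m, ∃ π, B.IsRunFrom B.init (W m) π := by
    intro m
    obtain ⟨π, hπ, -⟩ := hWL m
    exact ⟨π, hπ⟩
  choose Pi hPi using hrun
  refine hno ⟨fun n => Pi (n + 1) n, (hPi 1).1, fun n => ?_⟩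
  have h12 : Pi (n + 1) n = Pi (n + 2) n :=
    det_agree hdet (hPi (n + 1)) (hPi (n + 2))
      (fun i hi => (hW (n + 1) i hi).trans (hW (n + 2) i (by omega)).symm) n (by omega)
  refine ⟨((hPi (n + 1)).2 n).1, ?_, ?_⟩
  · show (Pi (n + 1) n).lab = w n
    rw [((hPi (n + 1)).2 n).2.1]
    exact hW (n + 1) n (by omega)
  · show (Pi (n + 1) n).dst = (Pi (n + 1 + 1) (n + 1)).src
    rw [h12]
    exact ((hPi (n + 2)).2 n).2.2

lemma key {A C : Type} [Fintype C] {M : Automaton A (Set C)} {S₀ : Finset C}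
    (hsound : ∀ (w : ℕ → A) (ρ : ℕ → AutTrans M.Q A (Set C)),
      M.IsRunFrom M.init w ρ →
      (∀ c ∈ S₀, ∀ n, ∃ m, n ≤ m ∧ c ∈ (ρ m).out) → w ∈ M.Lang)
    {c₁ c₂ : C} (hne : c₁ ≠ c₂)
    {w₁ w₂ : ℕ → A} {ρ₁ ρ₂ : ℕ → AutTrans M.Q A (Set C)}
    (hrun₁ : M.IsRunFrom M.init w₁ ρ₁) (hrun₂ : M.IsRunFrom M.init w₂ ρ₂)
    (hio₁ : ∀ d ∈ S₀, d ≠ c₁ → ∀ n, ∃ m, n ≤ m ∧ d ∈ (ρ₁ m).out)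
    (hio₂ : ∀ d ∈ S₀, d ≠ c₂ → ∀ n, ∃ m, n ≤ m ∧ d ∈ (ρ₂ m).out)
    {q : M.Q} {V₁ V₂ : ℕ → Prop}
    (hV₁ : ∀ n, ∃ m, n ≤ m ∧ V₁ m) (hV₂ : ∀ n, ∃ m, n ≤ m ∧ V₂ m)
    (hV₁q : ∀ n, V₁ n → (ρ₁ n).src = q) (hV₂q : ∀ n, V₂ n → (ρ₂ n).src = q)
    (hkill : ∀ a₁ L₁ a₂ L₂ : ℕ, 0 < L₁ → 0 < L₂ →
      V₁ a₁ → V₁ (a₁ + L₁) → V₂ a₂ → V₂ (a₂ + L₂) →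
      (fun n => (Sum.elim ρ₁ ρ₂ (spIdx a₁ L₁ a₂ L₂ n)).lab) ∉ M.Lang) : False := by
  classical
  obtain ⟨a₁, -, hVa₁⟩ := hV₁ 0
  obtain ⟨a₂, -, hVa₂⟩ := hV₂ 0
  -- choose colour occurrences in run 1 after a₁
  have hocc₁ : ∀ d : C, ∃ m, a₁ ≤ m ∧ (d ∈ S₀ → d ≠ c₁ → d ∈ (ρ₁ m).out) := by
    intro d
    by_cases h : d ∈ S₀ ∧ d ≠ c₁
    · obtain ⟨m, hm, hout⟩ := hio₁ d h.1 h.2 a₁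
      exact ⟨m, hm, fun _ _ => hout⟩
    · exact ⟨a₁, le_rfl, fun h1 h2 => absurd ⟨h1, h2⟩ h⟩
  choose f₁ hf₁a hf₁out using hocc₁
  have hocc₂ : ∀ d : C, ∃ m, a₂ ≤ m ∧ (d ∈ S₀ → d ≠ c₂ → d ∈ (ρ₂ m).out) := by
    intro d
    by_cases h : d ∈ S₀ ∧ d ≠ c₂
    · obtain ⟨m, hm, hout⟩ := hio₂ d h.1 h.2 a₂
      exact ⟨m, hm, fun _ _ => hout⟩
    · exact ⟨a₂, le_rfl, fun h1 h2 => absurd ⟨h1, h2⟩ h⟩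
  choose f₂ hf₂a hf₂out using hocc₂
  obtain ⟨b₁, hb₁ge, hVb₁⟩ := hV₁ (max (a₁ + 1) (Finset.univ.sup f₁ + 1))
  obtain ⟨b₂, hb₂ge, hVb₂⟩ := hV₂ (max (a₂ + 1) (Finset.univ.sup f₂ + 1))
  have hb₁a : a₁ + 1 ≤ b₁ := le_trans (le_max_left _ _) hb₁ge
  have hb₂a : a₂ + 1 ≤ b₂ := le_trans (le_max_left _ _) hb₂ge
  have hb₁s : Finset.univ.sup f₁ + 1 ≤ b₁ := le_trans (le_max_right _ _) hb₁ge
  have hb₂s : Finset.univ.sup f₂ + 1 ≤ b₂ := le_trans (le_max_right _ _) hb₂ge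
  set L₁ := b₁ - a₁ with hL₁def
  set L₂ := b₂ - a₂ with hL₂def
  have hL₁ : 0 < L₁ := by omega
  have hL₂ : 0 < L₂ := by omega
  have hab₁ : a₁ + L₁ = b₁ := by omega
  have hab₂ : a₂ + L₂ = b₂ := by omega
  set ρs : ℕ → AutTrans M.Q A (Set C) :=
    fun n => Sum.elim ρ₁ ρ₂ (spIdx a₁ L₁ a₂ L₂ n) with hρs
  have hmemdelta : ∀ n, ρs n ∈ M.delta := by
    intro n
    rcases hidx : spIdx a₁ L₁ a₂ L₂ n with m | m
    · simp only [hρs, hidx, Sum.elim_inl]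
      exact (hrun₁.2 m).1
    · simp only [hρs, hidx, Sum.elim_inr]
      exact (hrun₂.2 m).1
  have hrs : M.IsRunFrom M.init (fun n => (ρs n).lab) ρs := by
    refine ⟨?_, fun n => ⟨hmemdelta n, rfl, ?_⟩⟩
    · simp only [hρs, spIdx_lt (show 0 < a₁ + L₁ by omega), Sum.elim_inl]
      exact hrun₁.1
    · exact spl_chain AutTrans.src AutTrans.dst ρ₁ ρ₂
        (fun n => (hrun₁.2 n).2.2) (fun n => (hrun₂.2 n).2.2) hL₁ hL₂
        (by rw [hab₁, hV₁q b₁ hVb₁, hV₂q a₂ hVa₂])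
        (by rw [hab₂, hV₂q b₂ hVb₂, hV₁q a₁ hVa₁]) n
  have hmem : (fun n => (ρs n).lab) ∈ M.Lang := by
    apply hsound _ ρs hrs
    intro d hd n
    by_cases hdc : d = c₁
    · have hd2 : d ≠ c₂ := by rw [hdc]; exact hne
      have hfa := hf₂a d
      have hfo := hf₂out d hd hd2
      have hflt : f₂ d < b₂ := by
        have := Finset.le_sup (Finset.mem_univ d) (f := f₂)
        omega
      obtain ⟨m, hm, hidx⟩ := spl_occ₂ (a₁ := a₁) (L₁ := L₁) (a₂ := a₂) (L₂ := L₂)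
        (show f₂ d - a₂ < L₂ by omega) n
      refine ⟨m, hm, ?_⟩
      simp only [hρs, hidx, Sum.elim_inr]
      have : a₂ + (f₂ d - a₂) = f₂ d := by omega
      rw [this]
      exact hfo
    · have hfa := hf₁a d
      have hfo := hf₁out d hd hdc
      have hflt : f₁ d < b₁ := by
        have := Finset.le_sup (Finset.mem_univ d) (f := f₁)
        omega
      obtain ⟨m, hm, hidx⟩ := spl_occ₁ (a₁ := a₁) (L₁ := L₁) (a₂ := a₂) (L₂ := L₂)
        (show f₁ d - a₁ < L₁ by omega) n
      refine ⟨m, hm, ?_⟩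
      simp only [hρs, hidx, Sum.elim_inl]
      have : a₁ + (f₁ d - a₁) = f₁ d := by omega
      rw [this]
      exact hfo
  exact hkill a₁ L₁ a₂ L₂ hL₁ hL₂ hVa₁ (hab₁ ▸ hVb₁) hVa₂ (hab₂ ▸ hVb₂) hmem


lemma kill_live {A C : Type} {M : Automaton A (Set C)} {B : Automaton A (Set Unit)}
    (hBacc : B.acc = genBuchi Unit) (hBdet : B.Deterministic) (hBlang : B.Lang = M.Lang)
    {w₁ w₂ : ℕ → A} {ρ₁ ρ₂ : ℕ → AutTrans M.Q A (Set C)}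
    (hrun₁ : M.IsRunFrom M.init w₁ ρ₁) (hrun₂ : M.IsRunFrom M.init w₂ ρ₂)
    {π₁ π₂ : ℕ → AutTrans B.Q A (Set Unit)}
    (hπ₁ : B.IsRunFrom B.init w₁ π₁) (hπ₂ : B.IsRunFrom B.init w₂ π₂)
    {N₁ N₂ : ℕ} (hsafe₁ : ∀ m, N₁ ≤ m → () ∉ (π₁ m).out)
    (hsafe₂ : ∀ m, N₂ ≤ m → () ∉ (π₂ m).out)
    {p : B.Q} {a₁ L₁ a₂ L₂ : ℕ} (hL₁ : 0 < L₁) (hL₂ : 0 < L₂)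
    (hN₁ : N₁ ≤ a₁) (hN₂ : N₂ ≤ a₂)
    (hp₁ : (π₁ a₁).src = p) (hp₁' : (π₁ (a₁ + L₁)).src = p)
    (hp₂ : (π₂ a₂).src = p) (hp₂' : (π₂ (a₂ + L₂)).src = p) :
    (fun n => (Sum.elim ρ₁ ρ₂ (spIdx a₁ L₁ a₂ L₂ n)).lab) ∉ M.Lang := by
  rw [← hBlang]
  rintro ⟨π', hπ', hacc'⟩
  set πs : ℕ → AutTrans B.Q A (Set Unit) :=
    fun n => Sum.elim π₁ π₂ (spIdx a₁ L₁ a₂ L₂ n) with hπs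
  have hlabs : ∀ n, (πs n).lab = (Sum.elim ρ₁ ρ₂ (spIdx a₁ L₁ a₂ L₂ n)).lab := by
    intro n
    rcases hidx : spIdx a₁ L₁ a₂ L₂ n with m | m
    · simp only [hπs, hidx, Sum.elim_inl]
      rw [(hπ₁.2 m).2.1, (hrun₁.2 m).2.1]
    · simp only [hπs, hidx, Sum.elim_inr]
      rw [(hπ₂.2 m).2.1, (hrun₂.2 m).2.1]
  have hπsrun : B.IsRunFrom B.init (fun n => (Sum.elim ρ₁ ρ₂ (spIdx a₁ L₁ a₂ L₂ n)).lab) πs := by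
    refine ⟨?_, fun n => ⟨?_, hlabs n, ?_⟩⟩
    · simp only [hπs, spIdx_lt (show 0 < a₁ + L₁ by omega), Sum.elim_inl]
      exact hπ₁.1
    · rcases hidx : spIdx a₁ L₁ a₂ L₂ n with m | m
      · simp only [hπs, hidx, Sum.elim_inl]
        exact (hπ₁.2 m).1
      · simp only [hπs, hidx, Sum.elim_inr]
        exact (hπ₂.2 m).1
    · exact spl_chain AutTrans.src AutTrans.dst π₁ π₂
        (fun n => (hπ₁.2 n).2.2) (fun n => (hπ₂.2 n).2.2) hL₁ hL₂
        (hp₁'.trans hp₂.symm) (hp₂'.trans hp₁.symm) n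
  have heq : ∀ n, π' n = πs n := fun n =>
    det_agree hBdet hπ' hπsrun (m := n + 1) (fun i _ => rfl) n (by omega)
  rw [hBacc] at hacc'
  obtain ⟨m, hm, hout⟩ := hacc' () (a₁ + L₁)
  have hout' : () ∈ (πs m).out := by rw [← heq m]; exact hout
  rcases spIdx_ge (a₂ := a₂) (L₂ := L₂) hm with ⟨m', hm', hidx⟩ | ⟨m', hm', hidx⟩
  · rw [hπs] at hout'
    simp only [hidx, Sum.elim_inr] at hout'
    exact hsafe₂ m' (by omega) hout'
  · rw [hπs] at hout'
    simp only [hidx, Sum.elim_inl] at hout'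
    exact hsafe₁ m' (by omega) hout'


def Live {A C : Type} (M : Automaton A (Set C)) (B : Automaton A (Set Unit))
    (S₀ : Finset C) (c : C) (q : M.Q) (p : B.Q) : Prop :=
  ∃ (w : ℕ → A) (ρ : ℕ → AutTrans M.Q A (Set C)) (π : ℕ → AutTrans B.Q A (Set Unit)) (N : ℕ),
    M.IsRunFrom M.init w ρ ∧
    (∀ d ∈ S₀, d ≠ c → ∀ n, ∃ m, n ≤ m ∧ d ∈ (ρ m).out) ∧
    B.IsRunFrom B.init w π ∧
    (∀ m, N ≤ m → () ∉ (π m).out) ∧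
    (∀ n, ∃ m, n ≤ m ∧ N ≤ m ∧ (ρ m).src = q ∧ (π m).src = p)

def Dead {A C : Type} (M : Automaton A (Set C)) (S₀ : Finset C) (c : C) (q : M.Q) : Prop :=
  ∃ (w : ℕ → A) (ρ : ℕ → AutTrans M.Q A (Set C)) (m₀ : ℕ),
    M.IsRunFrom M.init w ρ ∧
    (∀ d ∈ S₀, d ≠ c → ∀ n, ∃ m, n ≤ m ∧ d ∈ (ρ m).out) ∧
    (∀ w' : ℕ → A, (∀ i < m₀, w' i = w i) → w' ∉ M.Lang) ∧
    (∀ n, ∃ m, n ≤ m ∧ m₀ ≤ m ∧ (ρ m).src = q)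

lemma live_proj {A C : Type} {M : Automaton A (Set C)} {B : Automaton A (Set Unit)}
    {S₀ : Finset C} {c : C} {q : M.Q} {p : B.Q} (h : Live M B S₀ c q p) :
    ∃ (w : ℕ → A) (ρ : ℕ → AutTrans M.Q A (Set C)),
      M.IsRunFrom M.init w ρ ∧
      (∀ d ∈ S₀, d ≠ c → ∀ n, ∃ m, n ≤ m ∧ d ∈ (ρ m).out) ∧
      (∀ n, ∃ m, n ≤ m ∧ (ρ m).src = q) := by
  obtain ⟨w, ρ, π, N, hrun, hio, -, -, hv⟩ := h
  refine ⟨w, ρ, hrun, hio, fun n => ?_⟩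
  obtain ⟨m, h1, -, h3, -⟩ := hv n
  exact ⟨m, h1, h3⟩

lemma dead_proj {A C : Type} {M : Automaton A (Set C)}
    {S₀ : Finset C} {c : C} {q : M.Q} (h : Dead M S₀ c q) :
    ∃ (w : ℕ → A) (ρ : ℕ → AutTrans M.Q A (Set C)),
      M.IsRunFrom M.init w ρ ∧
      (∀ d ∈ S₀, d ≠ c → ∀ n, ∃ m, n ≤ m ∧ d ∈ (ρ m).out) ∧
      (∀ n, ∃ m, n ≤ m ∧ (ρ m).src = q) := by
  obtain ⟨w, ρ, m₀, hrun, hio, -, hv⟩ := h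
  refine ⟨w, ρ, hrun, hio, fun n => ?_⟩
  obtain ⟨m, h1, -, h3⟩ := hv n
  exact ⟨m, h1, h3⟩

lemma live_live {A C : Type} [Fintype C] {M : Automaton A (Set C)} {B : Automaton A (Set Unit)}
    {S₀ : Finset C}
    (hsound : ∀ (w : ℕ → A) (ρ : ℕ → AutTrans M.Q A (Set C)),
      M.IsRunFrom M.init w ρ →
      (∀ c ∈ S₀, ∀ n, ∃ m, n ≤ m ∧ c ∈ (ρ m).out) → w ∈ M.Lang)
    (hBacc : B.acc = genBuchi Unit) (hBdet : B.Deterministic) (hBlang : B.Lang = M.Lang)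
    {c₁ c₂ : C} {q : M.Q} {p : B.Q} (hne : c₁ ≠ c₂)
    (h₁ : Live M B S₀ c₁ q p) (h₂ : Live M B S₀ c₂ q p) : False := by
  obtain ⟨w₁, ρ₁, π₁, N₁, hrun₁, hio₁, hπ₁, hsafe₁, hv₁⟩ := h₁
  obtain ⟨w₂, ρ₂, π₂, N₂, hrun₂, hio₂, hπ₂, hsafe₂, hv₂⟩ := h₂
  refine key hsound hne hrun₁ hrun₂ hio₁ hio₂
    (V₁ := fun n => N₁ ≤ n ∧ (ρ₁ n).src = q ∧ (π₁ n).src = p)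
    (V₂ := fun n => N₂ ≤ n ∧ (ρ₂ n).src = q ∧ (π₂ n).src = p)
    (fun n => by obtain ⟨m, h1, h2, h3, h4⟩ := hv₁ n; exact ⟨m, h1, h2, h3, h4⟩)
    (fun n => by obtain ⟨m, h1, h2, h3, h4⟩ := hv₂ n; exact ⟨m, h1, h2, h3, h4⟩)
    (fun n h => h.2.1) (fun n h => h.2.1) ?_
  intro a₁ L₁ a₂ L₂ hL₁ hL₂ hVa₁ hVb₁ hVa₂ hVb₂
  exact kill_live hBacc hBdet hBlang hrun₁ hrun₂ hπ₁ hπ₂ hsafe₁ hsafe₂ hL₁ hL₂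
    hVa₁.1 hVa₂.1 hVa₁.2.2 hVb₁.2.2 hVa₂.2.2 hVb₂.2.2

lemma dead_coll {A C : Type} [Fintype C] {M : Automaton A (Set C)}
    {S₀ : Finset C}
    (hsound : ∀ (w : ℕ → A) (ρ : ℕ → AutTrans M.Q A (Set C)),
      M.IsRunFrom M.init w ρ →
      (∀ c ∈ S₀, ∀ n, ∃ m, n ≤ m ∧ c ∈ (ρ m).out) → w ∈ M.Lang)
    {c₁ c₂ : C} {q : M.Q} (hne : c₁ ≠ c₂) (h₁ : Dead M S₀ c₁ q)
    (h₂ : ∃ (w₂ : ℕ → A) (ρ₂ : ℕ → AutTrans M.Q A (Set C)),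
      M.IsRunFrom M.init w₂ ρ₂ ∧
      (∀ d ∈ S₀, d ≠ c₂ → ∀ n, ∃ m, n ≤ m ∧ d ∈ (ρ₂ m).out) ∧
      (∀ n, ∃ m, n ≤ m ∧ (ρ₂ m).src = q)) : False := by
  obtain ⟨w₁, ρ₁, m₀, hrun₁, hio₁, hdead, hv₁⟩ := h₁
  obtain ⟨w₂, ρ₂, hrun₂, hio₂, hv₂⟩ := h₂
  refine key hsound hne hrun₁ hrun₂ hio₁ hio₂
    (V₁ := fun n => m₀ ≤ n ∧ (ρ₁ n).src = q) (V₂ := fun n => (ρ₂ n).src = q)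
    (fun n => by obtain ⟨m, h1, h2, h3⟩ := hv₁ n; exact ⟨m, h1, h2, h3⟩)
    hv₂ (fun n h => h.2) (fun n h => h) ?_
  intro a₁ L₁ a₂ L₂ hL₁ hL₂ hVa₁ hVb₁ hVa₂ hVb₂
  refine hdead _ (fun i hi => ?_)
  show (Sum.elim ρ₁ ρ₂ (spIdx a₁ L₁ a₂ L₂ i)).lab = w₁ i
  rw [spIdx_lt (show i < a₁ + L₁ by omega)]
  exact (hrun₁.2 i).2.1


end Stmt16
/-- a resolver-trim HD generalised Büchi automaton `A` with
`n_A` states that is equivalent to a deterministic Büchi automaton with `n_B`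
states can be recoloured (keeping states and transitions) with at most
`n_A · n_B` colours, the result being an equivalent resolver-trim HD
generalised Büchi automaton. -/
theorem stmt_16 {A C : Type} [Fintype C] (M : Automaton A (Set C))
    (hacc : M.acc = genBuchi C) (htrim : M.ResolverTrim)
    (B : Automaton A (Set Unit)) (hBacc : B.acc = genBuchi Unit)
    (hBdet : B.Deterministic) (hBlang : B.Lang = M.Lang) :
    ∃ (C' : Type) (iC : Fintype C') (col' : AutTrans M.Q A (Set C) → Set C'),
      @Fintype.card C' iC ≤ M.size * B.size ∧
      (recolor M col' (genBuchi C')).Lang = M.Lang ∧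
      (recolor M col' (genBuchi C')).ResolverTrim := by
  classical
  letI := M.fin
  letI := B.fin
  obtain ⟨r, hres, htrimr⟩ := htrim
  -- minimal sound colour set
  have hex : ∃ k, ∃ S : Finset C, S.card = k ∧
      ∀ (w : ℕ → A) (ρ : ℕ → AutTrans M.Q A (Set C)),
        M.IsRunFrom M.init w ρ →
        (∀ c ∈ S, ∀ n, ∃ m, n ≤ m ∧ c ∈ (ρ m).out) → w ∈ M.Lang := by
    refine ⟨Finset.univ.card, Finset.univ, rfl, fun w ρ hrun hio => ⟨ρ, hrun, ?_⟩⟩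
    rw [hacc]
    intro c n
    exact hio c (Finset.mem_univ c) n
  obtain ⟨S₀, hcard, hsound⟩ := Nat.find_spec hex
  have hmin : ∀ c ∈ S₀, ¬ ∀ (w : ℕ → A) (ρ : ℕ → AutTrans M.Q A (Set C)),
      M.IsRunFrom M.init w ρ →
      (∀ d ∈ S₀.erase c, ∀ n, ∃ m, n ≤ m ∧ d ∈ (ρ m).out) → w ∈ M.Lang := by
    intro c hc hS
    have hlt : (S₀.erase c).card < Nat.find hex := by
      rw [← hcard]
      exact Finset.card_erase_lt_of_mem hc
    exact Nat.find_min hex hlt ⟨S₀.erase c, rfl, hS⟩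
  -- per-colour witnesses
  have hwit : ∀ c ∈ S₀, ∃ (w : ℕ → A) (ρ : ℕ → AutTrans M.Q A (Set C)),
      M.IsRunFrom M.init w ρ ∧
      (∀ d ∈ S₀, d ≠ c → ∀ n, ∃ m, n ≤ m ∧ d ∈ (ρ m).out) ∧ w ∉ M.Lang := by
    intro c hc
    have h := hmin c hc
    push_neg at h
    obtain ⟨w, ρ, hrun, hio, hnl⟩ := h
    exact ⟨w, ρ, hrun,
      fun d hd hdne n => hio d (Finset.mem_erase.2 ⟨hdne, hd⟩) n, hnl⟩
  -- per-colour product pair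
  have hpair : ∀ c ∈ S₀, ∃ qp : M.Q × B.Q,
      Stmt16.Live M B S₀ c qp.1 qp.2 ∨ Stmt16.Dead M S₀ c qp.1 := by
    intro c hc
    obtain ⟨w, ρ, hrun, hio, hnl⟩ := hwit c hc
    by_cases hB : ∃ π, B.IsRunFrom B.init w π
    · obtain ⟨π, hπ⟩ := hB
      have hnacc : (fun n => (π n).out) ∉ B.acc := by
        intro ha
        have hw : w ∈ B.Lang := ⟨π, hπ, ha⟩
        rw [hBlang] at hw
        exact hnl hw
      have hN : ∃ N, ∀ m, N ≤ m → () ∉ (π m).out := by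
        by_contra hcon
        push_neg at hcon
        refine hnacc ?_
        rw [hBacc]
        intro u n
        obtain ⟨m, hm, hmem⟩ := hcon n
        cases u
        exact ⟨m, hm, hmem⟩
      obtain ⟨N, hsafe⟩ := hN
      obtain ⟨x, hx⟩ := Stmt16.exists_io (fun n => ((ρ (N + n)).src, (π (N + n)).src))
      refine ⟨x, Or.inl ⟨w, ρ, π, N, hrun, hio, hπ, hsafe, fun n => ?_⟩⟩
      obtain ⟨m, hm, hfm⟩ := hx n
      exact ⟨N + m, by omega, by omega, (Prod.ext_iff.1 hfm).1, (Prod.ext_iff.1 hfm).2⟩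
    · obtain ⟨m₀, hdead⟩ := Stmt16.dead_prefix hBdet hB
      simp only [hBlang] at hdead
      obtain ⟨x, hx⟩ := Stmt16.exists_io (fun n => (ρ (m₀ + n)).src)
      refine ⟨(x, B.init), Or.inr ⟨w, ρ, m₀, hrun, hio, hdead, fun n => ?_⟩⟩
      obtain ⟨m, hm, hfm⟩ := hx n
      exact ⟨m₀ + m, by omega, by omega, hfm⟩
  -- the map to product pairs and its injectivity
  set g : {c : C // c ∈ S₀} → M.Q × B.Q := fun c => (hpair c.1 c.2).choose with hg
  have hgspec : ∀ c : {c : C // c ∈ S₀},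
      Stmt16.Live M B S₀ c.1 (g c).1 (g c).2 ∨ Stmt16.Dead M S₀ c.1 (g c).1 :=
    fun c => (hpair c.1 c.2).choose_spec
  have hginj : Function.Injective g := by
    intro c c' heq
    by_contra hnecc
    have hne : (c : C) ≠ (c' : C) := fun h => hnecc (Subtype.ext h)
    rcases hgspec c with h1 | h1 <;> rcases hgspec c' with h2 | h2 <;> rw [← heq] at h2
    · exact Stmt16.live_live hsound hBacc hBdet hBlang hne h1 h2
    · exact Stmt16.dead_coll hsound hne.symm h2 (Stmt16.live_proj h1)
    · exact Stmt16.dead_coll hsound hne h1 (Stmt16.live_proj h2)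
    · exact Stmt16.dead_coll hsound hne h1 (Stmt16.dead_proj h2)
  -- the recolouring
  refine ⟨{c : C // c ∈ S₀}, inferInstance,
    fun t => {c : {c : C // c ∈ S₀} | (c : C) ∈ t.out}, ?_, ?_⟩
  · calc Fintype.card {c : C // c ∈ S₀} ≤ Fintype.card (M.Q × B.Q) :=
        Fintype.card_le_of_injective g hginj
      _ = M.size * B.size := by rw [Fintype.card_prod]; rfl
  -- language equality and history-determinism
  have hlang : (recolor M (fun t => {c : {c : C // c ∈ S₀} | (c : C) ∈ t.out})
      (genBuchi {c : C // c ∈ S₀})).Lang = M.Lang := by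
    apply Set.Subset.antisymm
    · rintro w ⟨ρ', hrun', hacc'⟩
      have hch : ∀ n, ∃ t, t ∈ M.delta ∧ (ρ' n).src = t.src ∧ (ρ' n).lab = t.lab ∧
          (ρ' n).out = {c : {c : C // c ∈ S₀} | (c : C) ∈ t.out} ∧ (ρ' n).dst = t.dst :=
        fun n => (hrun'.2 n).1
      choose t ht hsrc hlab hout hdst using hch
      have hrunA : M.IsRunFrom M.init w t := by
        refine ⟨?_, fun n => ⟨ht n, ?_, ?_⟩⟩
        · rw [← hsrc 0]
          exact hrun'.1
        · rw [← hlab n]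
          exact (hrun'.2 n).2.1
        · rw [← hdst n, ← hsrc (n + 1)]
          exact (hrun'.2 n).2.2
      apply hsound w t hrunA
      intro c hc n
      obtain ⟨m, hm, hmem⟩ := hacc' ⟨c, hc⟩ n
      have hmem' : (⟨c, hc⟩ : {c : C // c ∈ S₀}) ∈ (ρ' m).out := hmem
      rw [hout m] at hmem'
      exact ⟨m, hm, hmem'⟩
    · intro w hw
      have hrr := (hres w).1
      have hracc := (hres w).2 hw
      rw [hacc] at hracc
      refine ⟨fun n => ⟨(M.resRun r w n).src, (M.resRun r w n).lab,
        {c : {c : C // c ∈ S₀} | (c : C) ∈ (M.resRun r w n).out},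
        (M.resRun r w n).dst⟩, ⟨hrr.1, fun n => ?_⟩, ?_⟩
      · exact ⟨⟨M.resRun r w n, (hrr.2 n).1, rfl, rfl, rfl, rfl⟩,
          (hrr.2 n).2.1, (hrr.2 n).2.2⟩
      · intro c n
        obtain ⟨m, hm, hmem⟩ := hracc c.1 n
        exact ⟨m, hm, hmem⟩
  refine ⟨hlang, fun u => ⟨(r u).src, (r u).lab,
    {c : {c : C // c ∈ S₀} | (c : C) ∈ (r u).out}, (r u).dst⟩, ?_, ?_⟩
  · intro w
    have hrr := (hres w).1
    refine ⟨⟨hrr.1, fun n => ⟨⟨M.resRun r w n, (hrr.2 n).1, rfl, rfl, rfl, rfl⟩,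
        (hrr.2 n).2.1, (hrr.2 n).2.2⟩⟩, ?_⟩
    intro hw
    rw [hlang] at hw
    have hracc := (hres w).2 hw
    rw [hacc] at hracc
    intro c n
    obtain ⟨m, hm, hmem⟩ := hracc c.1 n
    exact ⟨m, hm, hmem⟩
  · intro q
    obtain ⟨w, hwL, n, hsrc⟩ := htrimr q
    refine ⟨w, ?_, n, hsrc⟩
    rw [hlang]
    exact hwL
end

section
/- Let A be a deterministic generalised Büchi automaton with n states and a colour set of size k. Then there exists a deterministic generalised Büchi automaton B with L(B) = L(A) such that B has at most as many states as every deterministic generalised Büchi automaton equivalent to A (i.e., B has a minimal number of states), and the colour set of B has size at most n²·k. -/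
/-!
Take an equivalent deterministic generalised Büchi automaton `B` with the fewest states and
delete its states with empty language, then pick an inclusion-minimal set `S` of colours of `B`
that still recognises the language. For `d ∈ S`, dropping `d` admits a word outside the language
whose run in `B` sees `S \ {d}` infinitely often, while the run of the given automaton `M`
(which exists since every state of `B` has nonempty language) eventually avoids some colour `c`.
A pair of states `(p, q)` of `B × M` recurring on this word closes a loop. If two colours
`d₁ ≠ d₂` gave the same `(p, q, c)`, alternating their two loops forever would produce a word
whose run in `B` sees all of `S`, so it lies in the language, while the run of `M` never sees `c`
again. Hence `d ↦ (p, q, c)` is injective and `|S| ≤ |B| · |M| · k ≤ n² · k`.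
-/

section Sequences

variable {X Y : Type}

def seqAppend (i : ℕ) (f g : ℕ → X) (n : ℕ) : X :=
  if n < i then f n else g (n - i)

theorem seqAppend_of_lt {i n : ℕ} (f g : ℕ → X) (h : n < i) : seqAppend i f g n = f n :=
  if_pos h

theorem seqAppend_add (i : ℕ) (f g : ℕ → X) (n : ℕ) : seqAppend i f g (i + n) = g n := by
  simp [seqAppend]

theorem comp_seqAppend (φ : X → Y) (i : ℕ) (f g : ℕ → X) :
    φ ∘ seqAppend i f g = seqAppend i (φ ∘ f) (φ ∘ g) := by
  funext n
  simp only [Function.comp_apply, seqAppend]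
  split_ifs <;> rfl

def lasso (i : ℕ) (f ℓ : ℕ → X) (p : ℕ) : ℕ → X :=
  seqAppend i f fun n => ℓ (n % p)

theorem comp_lasso (φ : X → Y) (i : ℕ) (f ℓ : ℕ → X) (p : ℕ) :
    φ ∘ lasso i f ℓ p = lasso i (φ ∘ f) (φ ∘ ℓ) p := by
  rw [lasso, comp_seqAppend]
  rfl

theorem lasso_add_mul {i p j : ℕ} (f ℓ : ℕ → X) (hj : j < p) (n : ℕ) :
    lasso i f ℓ p (i + (j + p * n)) = ℓ j := by
  rw [lasso, seqAppend_add, Nat.add_mul_mod_self_left, Nat.mod_eq_of_lt hj]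

theorem exists_lasso_eq {i p n : ℕ} (f ℓ : ℕ → X) (hp : 0 < p) (hn : i ≤ n) :
    ∃ j < p, lasso i f ℓ p n = ℓ j := by
  obtain ⟨m, rfl⟩ := Nat.exists_eq_add_of_le hn
  exact ⟨m % p, Nat.mod_lt m hp, by rw [lasso, seqAppend_add]⟩

def splice (f g : ℕ → X) (i₁ i₂ i₁' i₂' : ℕ) : ℕ → X :=
  lasso i₁ f (seqAppend (i₂ - i₁) (fun j => f (i₁ + j)) (fun j => g (i₁' + j)))
    (i₂ - i₁ + (i₂' - i₁'))

theorem comp_splice (φ : X → Y) (f g : ℕ → X) (i₁ i₂ i₁' i₂' : ℕ) :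
    φ ∘ splice f g i₁ i₂ i₁' i₂' = splice (φ ∘ f) (φ ∘ g) i₁ i₂ i₁' i₂' := by
  rw [splice, comp_lasso, comp_seqAppend]
  rfl

section

variable {i₁ i₂ i₁' i₂' : ℕ}

theorem splice_zero (f g : ℕ → X) (h : i₁ < i₂) : splice f g i₁ i₂ i₁' i₂' 0 = f 0 := by
  rcases Nat.eq_zero_or_pos i₁ with rfl | hi₁
  · simp [splice, lasso, seqAppend, h]
  · rw [splice, lasso, seqAppend_of_lt _ _ hi₁]

theorem splice_eq_left_or_right (f g : ℕ → X) (h : i₁ < i₂) {n : ℕ} (hn : i₁ ≤ n) :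
    (∃ k, i₁ ≤ k ∧ k < i₂ ∧ splice f g i₁ i₂ i₁' i₂' n = f k) ∨
      ∃ k, i₁' ≤ k ∧ k < i₂' ∧ splice f g i₁ i₂ i₁' i₂' n = g k := by
  obtain ⟨j, hj, hn⟩ := exists_lasso_eq (p := i₂ - i₁ + (i₂' - i₁')) f
    (seqAppend (i₂ - i₁) (fun j => f (i₁ + j)) (fun j => g (i₁' + j))) (by omega) hn
  rw [splice, hn]
  by_cases hj' : j < i₂ - i₁
  · exact Or.inl ⟨i₁ + j, by omega, by omega, seqAppend_of_lt _ _ hj'⟩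
  · obtain ⟨m, rfl⟩ := Nat.exists_eq_add_of_le (not_lt.1 hj')
    exact Or.inr ⟨i₁' + m, by omega, by omega, seqAppend_add _ _ _ _⟩

theorem frequently_splice_eq_left (f g : ℕ → X) {k : ℕ}
    (hk₁ : i₁ ≤ k) (hk₂ : k < i₂) (n : ℕ) :
    ∃ m, n ≤ m ∧ splice f g i₁ i₂ i₁' i₂' m = f k := by
  obtain ⟨j, rfl⟩ := Nat.exists_eq_add_of_le hk₁
  have := Nat.le_mul_of_pos_left n (show 0 < i₂ - i₁ + (i₂' - i₁') by omega)
  refine ⟨i₁ + (j + (i₂ - i₁ + (i₂' - i₁')) * n), by omega, ?_⟩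
  rw [splice, lasso_add_mul _ _ (by omega), seqAppend_of_lt _ _ (by omega)]

theorem frequently_splice_eq_right (f g : ℕ → X) {k : ℕ}
    (hk₁ : i₁' ≤ k) (hk₂ : k < i₂') (n : ℕ) :
    ∃ m, n ≤ m ∧ splice f g i₁ i₂ i₁' i₂' m = g k := by
  obtain ⟨j, rfl⟩ := Nat.exists_eq_add_of_le hk₁
  have := Nat.le_mul_of_pos_left n (show 0 < i₂ - i₁ + (i₂' - i₁') by omega)
  refine ⟨i₁ + ((i₂ - i₁ + j) + (i₂ - i₁ + (i₂' - i₁')) * n), by omega, ?_⟩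
  rw [splice, lasso_add_mul _ _ (by omega), seqAppend_add]

end

end Sequences

theorem exists_frequently_eq_of_finite {X : Type} [Finite X] (f : ℕ → X) :
    ∃ x, ∀ n, ∃ m, n ≤ m ∧ f m = x := by
  obtain ⟨x, hx⟩ := Finite.exists_infinite_fiber f
  exact ⟨x, Filter.frequently_atTop.1
    (Nat.frequently_atTop_iff_infinite.2 (Set.infinite_coe_iff.1 hx))⟩

theorem exists_bound_of_frequently {ι : Type} (T : Finset ι) {P : ι → ℕ → Prop}
    (h : ∀ e ∈ T, ∀ n, ∃ m, n ≤ m ∧ P e m) (n : ℕ) :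
    ∃ K, ∀ e ∈ T, ∃ m, n ≤ m ∧ m < K ∧ P e m := by
  classical
  induction T using Finset.induction_on with
  | empty => exact ⟨0, by simp⟩
  | insert a T _ ih =>
    obtain ⟨K, hK⟩ := ih fun e he => h e (Finset.mem_insert_of_mem he)
    obtain ⟨m, hm, hPm⟩ := h a (Finset.mem_insert_self a T) n
    refine ⟨max K (m + 1), fun e he => ?_⟩
    rcases Finset.mem_insert.1 he with rfl | he
    · exact ⟨m, hm, by omega, hPm⟩
    · obtain ⟨m', hm', hm'K, hPm'⟩ := hK e he
      exact ⟨m', hm', by omega, hPm'⟩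

namespace Automaton

section Runs

variable {A Γ : Type}

def IsPathUpTo (N : Automaton A Γ) (κ : ℕ → AutTrans N.Q A Γ) (k : ℕ) : Prop :=
  ∀ n < k, κ n ∈ N.delta ∧ (κ n).dst = (κ (n + 1)).src

variable {N : Automaton A Γ}

theorem IsRunFrom.isPathUpTo {q : N.Q} {w : ℕ → A} {ρ : ℕ → AutTrans N.Q A Γ}
    (h : N.IsRunFrom q w ρ) (k : ℕ) : N.IsPathUpTo ρ k :=
  fun n _ => ⟨(h.2 n).1, (h.2 n).2.2⟩

theorem isRunFrom_of_isPathUpTo {q : N.Q} {w : ℕ → A} {κ : ℕ → AutTrans N.Q A Γ}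
    (h0 : (κ 0).src = q) (hκ : ∀ k, N.IsPathUpTo κ k) (hlab : ∀ n, (κ n).lab = w n) :
    N.IsRunFrom q w κ :=
  ⟨h0, fun n => ⟨(hκ (n + 1) n n.lt_succ_self).1, hlab n, (hκ (n + 1) n n.lt_succ_self).2⟩⟩

namespace IsPathUpTo

variable {κ f g ℓ : ℕ → AutTrans N.Q A Γ}

theorem mono {k k' : ℕ} (h : N.IsPathUpTo κ k) (hk : k' ≤ k) : N.IsPathUpTo κ k' :=
  fun n hn => h n (by omega)

theorem shift {a k : ℕ} (h : N.IsPathUpTo κ (a + k)) : N.IsPathUpTo (fun j => κ (a + j)) k :=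
  fun n hn => h (a + n) (by omega)

protected theorem seqAppend {i k : ℕ} (hf : N.IsPathUpTo f i) (hfg : (f i).src = (g 0).src)
    (hg : N.IsPathUpTo g k) : N.IsPathUpTo (seqAppend i f g) (i + k) := by
  intro n hn
  by_cases hni : n < i
  · rw [seqAppend_of_lt _ _ hni]
    refine ⟨(hf n hni).1, (hf n hni).2.trans ?_⟩
    rcases Nat.lt_or_ge (n + 1) i with h | h
    · rw [seqAppend_of_lt _ _ h]
    · obtain rfl : i = n + 1 := by omega
      exact hfg.trans (congrArg AutTrans.src (seqAppend_add (n + 1) f g 0).symm)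
  · obtain ⟨m, rfl⟩ := Nat.exists_eq_add_of_le (not_lt.1 hni)
    rw [seqAppend_add, show i + m + 1 = i + (m + 1) by omega, seqAppend_add]
    exact hg m (by omega)

theorem periodic {p : ℕ} (hp : 0 < p) (hℓ : N.IsPathUpTo ℓ p) (hcyc : (ℓ p).src = (ℓ 0).src)
    (k : ℕ) : N.IsPathUpTo (fun n => ℓ (n % p)) k := by
  intro n _
  have hj := Nat.mod_lt n hp
  refine ⟨(hℓ _ hj).1, (hℓ _ hj).2.trans ?_⟩
  show _ = (ℓ ((n + 1) % p)).src
  rw [← Nat.mod_add_mod n p 1]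
  rcases Nat.lt_or_ge (n % p + 1) p with h | h
  · rw [Nat.mod_eq_of_lt h]
  · rw [show n % p + 1 = p by omega, Nat.mod_self, hcyc]

protected theorem lasso {i p : ℕ} (hf : N.IsPathUpTo f i) (hfℓ : (f i).src = (ℓ 0).src)
    (hp : 0 < p) (hℓ : N.IsPathUpTo ℓ p) (hcyc : (ℓ p).src = (ℓ 0).src) (k : ℕ) :
    N.IsPathUpTo (lasso i f ℓ p) k :=
  (hf.seqAppend (by simpa using hfℓ) (hℓ.periodic hp hcyc k)).mono (by omega)

end IsPathUpTo

namespace IsRunFrom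

variable {q q' : N.Q} {w w' v : ℕ → A} {ρ ρ' ν : ℕ → AutTrans N.Q A Γ}

theorem drop (h : N.IsRunFrom q w ρ) (i : ℕ) :
    N.IsRunFrom (ρ i).src (fun n => w (i + n)) (fun n => ρ (i + n)) :=
  ⟨rfl, fun n => h.2 (i + n)⟩

protected theorem seqAppend (h : N.IsRunFrom q w ρ) (i : ℕ) (hν : N.IsRunFrom (ρ i).src v ν) :
    N.IsRunFrom q (seqAppend i w v) (seqAppend i ρ ν) := by
  refine isRunFrom_of_isPathUpTo ?_
    (fun k => ((h.isPathUpTo i).seqAppend hν.1.symm (hν.isPathUpTo k)).mono (by omega))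
    (fun n => ?_)
  · rcases Nat.eq_zero_or_pos i with rfl | hi
    · exact hν.1.trans h.1
    · rw [seqAppend_of_lt _ _ hi]
      exact h.1
  · simp only [seqAppend]
    split_ifs
    exacts [(h.2 n).2.1, (hν.2 _).2.1]

protected theorem splice {w₁ w₂ : ℕ → A} {ρ₁ ρ₂ : ℕ → AutTrans N.Q A Γ}
    (h₁ : N.IsRunFrom q w₁ ρ₁) (h₂ : N.IsRunFrom q' w₂ ρ₂) {i₁ i₂ i₁' i₂' : ℕ}
    (hi : i₁ < i₂) (hi' : i₁' < i₂') {z : N.Q} (e₁ : (ρ₁ i₁).src = z) (e₂ : (ρ₁ i₂).src = z)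
    (e₁' : (ρ₂ i₁').src = z) (e₂' : (ρ₂ i₂').src = z) :
    N.IsRunFrom q (splice w₁ w₂ i₁ i₂ i₁' i₂') (splice ρ₁ ρ₂ i₁ i₂ i₁' i₂') := by
  have hloop : N.IsPathUpTo (seqAppend (i₂ - i₁) (fun j => ρ₁ (i₁ + j)) (fun j => ρ₂ (i₁' + j)))
      (i₂ - i₁ + (i₂' - i₁')) :=
    IsPathUpTo.seqAppend (IsPathUpTo.shift (h₁.isPathUpTo _))
      (by simp [Nat.add_sub_cancel' hi.le, e₂, e₁']) (IsPathUpTo.shift (h₂.isPathUpTo _))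
  refine isRunFrom_of_isPathUpTo (by rw [splice_zero _ _ hi]; exact h₁.1)
    ((h₁.isPathUpTo i₁).lasso ?_ (by omega) hloop ?_) (fun n => ?_)
  · rw [seqAppend_of_lt _ _ (by omega), Nat.add_zero]
  · rw [seqAppend_add, seqAppend_of_lt _ _ (by omega), Nat.add_zero,
      Nat.add_sub_cancel' hi'.le, e₂', e₁]
  · have hw₁ : AutTrans.lab ∘ ρ₁ = w₁ := funext fun n => (h₁.2 n).2.1
    have hw₂ : AutTrans.lab ∘ ρ₂ = w₂ := funext fun n => (h₂.2 n).2.1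
    rw [← hw₁, ← hw₂, ← comp_splice]
    rfl

theorem eq_of_eqOn (hdet : N.Deterministic) (h : N.IsRunFrom q w ρ) (h' : N.IsRunFrom q w' ρ')
    {i : ℕ} (hw : ∀ j < i, w j = w' j) : ∀ j < i, ρ j = ρ' j := by
  have step : ∀ j < i, (ρ j).src = (ρ' j).src → ρ j = ρ' j := fun j hj hs =>
    hdet _ (h.2 j).1 _ (h'.2 j).1 hs (by rw [(h.2 j).2.1, (h'.2 j).2.1, hw j hj])
  intro j
  induction j with
  | zero => exact fun hj => step 0 hj (h.1.trans h'.1.symm)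
  | succ j ih =>
    exact fun hj => step _ hj (by rw [← (h.2 j).2.2, ← (h'.2 j).2.2, ih (by omega)])

end IsRunFrom

theorem exists_isRunFrom_of_forall_prefix (hdet : N.Deterministic) {q : N.Q} {w : ℕ → A}
    (h : ∀ i, ∃ w' ρ, N.IsRunFrom q w' ρ ∧ ∀ j < i, w' j = w j) : ∃ ρ, N.IsRunFrom q w ρ := by
  choose w' ρ hρ hw using h
  have hagree : ∀ n, ρ (n + 1) n = ρ (n + 2) n := fun n =>
    (hρ (n + 1)).eq_of_eqOn hdet (hρ (n + 2))
      (fun j hj => (hw _ j hj).trans (hw _ j (by omega)).symm) n (by omega)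
  refine ⟨fun n => ρ (n + 1) n, (hρ 1).1, fun n =>
    ⟨((hρ _).2 n).1, ((hρ _).2 n).2.1.trans (hw _ n (by omega)), ?_⟩⟩
  show (ρ (n + 1) n).dst = (ρ (n + 2) (n + 1)).src
  rw [hagree]
  exact ((hρ _).2 n).2.2

theorem IsRunFrom.eq (hdet : N.Deterministic) {q : N.Q} {w : ℕ → A}
    {ρ ρ' : ℕ → AutTrans N.Q A Γ} (h : N.IsRunFrom q w ρ) (h' : N.IsRunFrom q w ρ') : ρ = ρ' :=
  funext fun n => h.eq_of_eqOn hdet h' (i := n + 1) (fun _ _ => rfl) n n.lt_succ_self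

theorem size_pos (N : Automaton A Γ) : 0 < N.size :=
  @Fintype.card_pos _ N.fin ⟨N.init⟩

end Runs

section Trim

variable {A Γ D : Type}

theorem mem_langFrom_drop {B : Automaton A (Set D)} (hacc : B.acc = genBuchi D) {q : B.Q}
    {w : ℕ → A} {ρ : ℕ → AutTrans B.Q A (Set D)} (h : B.IsRunFrom q w ρ)
    (hρ : (fun n => (ρ n).out) ∈ B.acc) (i : ℕ) :
    (fun n => w (i + n)) ∈ B.LangFrom (ρ i).src := by
  refine ⟨_, h.drop i, ?_⟩
  rw [hacc] at hρ ⊢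
  intro c n
  obtain ⟨m, hm, hc⟩ := hρ c (i + n)
  refine ⟨m - i, by omega, ?_⟩
  show c ∈ (ρ (i + (m - i))).out
  rwa [Nat.add_sub_cancel' (by omega)]

theorem seqAppend_mem_langFrom {B : Automaton A (Set D)} (hacc : B.acc = genBuchi D) {q : B.Q}
    {w v : ℕ → A} {ρ : ℕ → AutTrans B.Q A (Set D)} (h : B.IsRunFrom q w ρ) (i : ℕ)
    (hv : v ∈ B.LangFrom (ρ i).src) : seqAppend i w v ∈ B.LangFrom q := by
  obtain ⟨ν, hν, hνacc⟩ := hv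
  refine ⟨_, h.seqAppend i hν, ?_⟩
  rw [hacc] at hνacc ⊢
  intro c n
  obtain ⟨m, hm, hc⟩ := hνacc c n
  refine ⟨i + m, by omega, ?_⟩
  show c ∈ (seqAppend i ρ ν (i + m)).out
  rwa [seqAppend_add]

noncomputable def trim (B : Automaton A Γ) (h : (B.LangFrom B.init).Nonempty) :
    Automaton A Γ where
  Q := {q : B.Q // (B.LangFrom q).Nonempty}
  fin := @Subtype.fintype _ _ (fun _ => Classical.propDecidable _) B.fin
  init := ⟨B.init, h⟩
  delta := {t | ⟨t.src.1, t.lab, t.out, t.dst.1⟩ ∈ B.delta}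
  acc := B.acc

theorem trim_deterministic {B : Automaton A Γ} {h : (B.LangFrom B.init).Nonempty}
    (hdet : B.Deterministic) : (B.trim h).Deterministic := by
  intro t ht t' ht' hs hl
  obtain ⟨-, -, ho, hd⟩ := AutTrans.mk.inj (hdet _ ht _ ht' (congrArg Subtype.val hs) hl)
  cases t; cases t'
  simp only [AutTrans.mk.injEq] at hs hl ho hd ⊢
  exact ⟨hs, hl, ho, Subtype.ext hd⟩

theorem trim_size_le {B : Automaton A Γ} {h : (B.LangFrom B.init).Nonempty} :
    (B.trim h).size ≤ B.size :=
  @Fintype.card_le_of_injective _ _ (B.trim h).fin B.fin Subtype.val Subtype.val_injective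

theorem langFrom_trim {B : Automaton A (Set D)} (hacc : B.acc = genBuchi D)
    {h : (B.LangFrom B.init).Nonempty} (q : (B.trim h).Q) :
    (B.trim h).LangFrom q = B.LangFrom q.1 := by
  ext w
  constructor
  · rintro ⟨ρ, hρ, hacc'⟩
    exact ⟨fun n => ⟨(ρ n).src.1, (ρ n).lab, (ρ n).out, (ρ n).dst.1⟩,
      ⟨congrArg Subtype.val hρ.1, fun n => ⟨(hρ.2 n).1, (hρ.2 n).2.1,
        congrArg Subtype.val (hρ.2 n).2.2⟩⟩, hacc'⟩
  · rintro ⟨τ, hτ, hacc'⟩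
    have hne : ∀ n, (B.LangFrom (τ n).src).Nonempty :=
      fun n => ⟨_, mem_langFrom_drop hacc hτ hacc' n⟩
    have hne' : ∀ n, (B.LangFrom (τ n).dst).Nonempty := fun n => (hτ.2 n).2.2 ▸ hne (n + 1)
    exact ⟨fun n => ⟨⟨(τ n).src, hne n⟩, (τ n).lab, (τ n).out, ⟨(τ n).dst, hne' n⟩⟩,
      ⟨Subtype.ext hτ.1, fun n => ⟨(hτ.2 n).1, (hτ.2 n).2.1, Subtype.ext (hτ.2 n).2.2⟩⟩, hacc'⟩

theorem lang_trim {B : Automaton A (Set D)} (hacc : B.acc = genBuchi D)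
    {h : (B.LangFrom B.init).Nonempty} : (B.trim h).Lang = B.Lang :=
  langFrom_trim hacc (B.trim h).init

theorem langFrom_trim_nonempty {B : Automaton A (Set D)} (hacc : B.acc = genBuchi D)
    {h : (B.LangFrom B.init).Nonempty} (q : (B.trim h).Q) : ((B.trim h).LangFrom q).Nonempty :=
  langFrom_trim hacc q ▸ q.2

end Trim

section Recolor

variable {A Γ Γ' D : Type} {M : Automaton A Γ} {f : AutTrans M.Q A Γ → Γ'} {acc' : Set (ℕ → Γ')}

theorem recolor_deterministic (hdet : M.Deterministic) : (recolor M f acc').Deterministic := by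
  rintro t ⟨u, hu, hts, htl, hto, htd⟩ t' ⟨u', hu', hts', htl', hto', htd'⟩ hs hl
  obtain rfl : u = u' := hdet u hu u' hu' (by rw [← hts, ← hts', hs]) (by rw [← htl, ← htl', hl])
  cases t; cases t'
  simp_all

theorem mem_lang_recolor {w : ℕ → A} :
    w ∈ (recolor M f acc').Lang ↔
      ∃ ρ, M.IsRunFrom M.init w ρ ∧ (fun n => f (ρ n)) ∈ acc' := by
  constructor
  · rintro ⟨ρ', hρ', hacc⟩
    choose u hu hus hul huo hud using fun n => (hρ'.2 n).1
    refine ⟨u, ⟨(hus 0).symm.trans hρ'.1, fun n => ⟨hu n, (hul n).symm.trans (hρ'.2 n).2.1,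
      (hud n).symm.trans ((hρ'.2 n).2.2.trans (hus (n + 1)))⟩⟩, ?_⟩
    have hout : (fun n => f (u n)) = fun n => (ρ' n).out := funext fun n => (huo n).symm
    rw [hout]
    exact hacc
  · rintro ⟨ρ, hρ, hacc⟩
    exact ⟨fun n => ⟨(ρ n).src, (ρ n).lab, f (ρ n), (ρ n).dst⟩,
      ⟨hρ.1, fun n => ⟨⟨ρ n, (hρ.2 n).1, rfl, rfl, rfl, rfl⟩, (hρ.2 n).2⟩⟩, hacc⟩

def restrictColours (B : Automaton A (Set D)) (S : Finset D) : Automaton A (Set S) :=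
  recolor B (fun t => {d | ↑d ∈ t.out}) (genBuchi S)

theorem mem_lang_restrictColours {B : Automaton A (Set D)} {S : Finset D} {w : ℕ → A} :
    w ∈ (restrictColours B S).Lang ↔
      ∃ ρ, B.IsRunFrom B.init w ρ ∧ ∀ d ∈ S, ∀ n, ∃ m, n ≤ m ∧ d ∈ (ρ m).out := by
  simp [restrictColours, mem_lang_recolor, genBuchi]

theorem lang_restrictColours_univ [Fintype D] {B : Automaton A (Set D)}
    (hacc : B.acc = genBuchi D) : (restrictColours B Finset.univ).Lang = B.Lang := by
  ext w
  rw [mem_lang_restrictColours]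
  simp [Lang, LangFrom, hacc, genBuchi]

theorem lang_restrictColours_anti {B : Automaton A (Set D)} {S T : Finset D} (hST : S ⊆ T) :
    (restrictColours B T).Lang ⊆ (restrictColours B S).Lang := by
  intro w hw
  obtain ⟨ρ, hρ, hT⟩ := mem_lang_restrictColours.1 hw
  exact mem_lang_restrictColours.2 ⟨ρ, hρ, fun d hd => hT d (hST hd)⟩

end Recolor

section ColourReduction

variable {A C D : Type} {M : Automaton A (Set C)} {B : Automaton A (Set D)}

theorem exists_isRunFrom_of_trim (hMdet : M.Deterministic) (hBacc : B.acc = genBuchi D)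
    (hL : B.Lang = M.Lang) (htrim : ∀ q, (B.LangFrom q).Nonempty) {w : ℕ → A}
    {ρ : ℕ → AutTrans B.Q A (Set D)} (hρ : B.IsRunFrom B.init w ρ) :
    ∃ σ, M.IsRunFrom M.init w σ :=
  exists_isRunFrom_of_forall_prefix hMdet fun i => by
    obtain ⟨v, hv⟩ := htrim (ρ i).src
    obtain ⟨σ, hσ, -⟩ : seqAppend i w v ∈ M.Lang := hL ▸ seqAppend_mem_langFrom hBacc hρ i hv
    exact ⟨_, σ, hσ, fun j hj => seqAppend_of_lt _ _ hj⟩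

variable (M B) in
def ColourWitness (S : Finset D) (d : D) (p : B.Q) (q : M.Q) (c : C) : Prop :=
  ∃ (w : ℕ → A) (ρ : ℕ → AutTrans B.Q A (Set D)) (σ : ℕ → AutTrans M.Q A (Set C)) (i₁ i₂ : ℕ),
    B.IsRunFrom B.init w ρ ∧ M.IsRunFrom M.init w σ ∧ i₁ < i₂ ∧
    (ρ i₁).src = p ∧ (ρ i₂).src = p ∧ (σ i₁).src = q ∧ (σ i₂).src = q ∧
    (∀ k, i₁ ≤ k → k < i₂ → c ∉ (σ k).out) ∧
    ∀ e ∈ S, e ≠ d → ∃ k, i₁ ≤ k ∧ k < i₂ ∧ e ∈ (ρ k).out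

theorem exists_colourWitness [DecidableEq D] (hMacc : M.acc = genBuchi C)
    (hMdet : M.Deterministic) (hBacc : B.acc = genBuchi D) (hL : B.Lang = M.Lang)
    (htrim : ∀ q, (B.LangFrom q).Nonempty)
    {S : Finset D} {d : D} (hS : (restrictColours B S).Lang = M.Lang)
    (hd : (restrictColours B (S.erase d)).Lang ≠ M.Lang) :
    ∃ p q c, ColourWitness M B S d p q c := by
  obtain ⟨w, hwd, hwM⟩ : ∃ w ∈ (restrictColours B (S.erase d)).Lang, w ∉ M.Lang := by
    by_contra! h
    exact hd (subset_antisymm h (hS ▸ lang_restrictColours_anti (S.erase_subset d)))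
  obtain ⟨ρ, hρ, hρS⟩ := mem_lang_restrictColours.1 hwd
  obtain ⟨σ, hσ⟩ := exists_isRunFrom_of_trim hMdet hBacc hL htrim hρ
  obtain ⟨c, N, hc⟩ : ∃ c N, ∀ m, N ≤ m → c ∉ (σ m).out := by
    by_contra! h
    exact hwM ⟨σ, hσ, by rw [hMacc]; exact h⟩
  let _ := B.fin
  let _ := M.fin
  obtain ⟨⟨p, q⟩, hpq⟩ := exists_frequently_eq_of_finite fun m => ((ρ m).src, (σ m).src)
  obtain ⟨i₁, hNi₁, hi₁⟩ := hpq N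
  obtain ⟨K, hK⟩ := exists_bound_of_frequently (S.erase d) hρS i₁
  obtain ⟨i₂, hi₂, hi₂pq⟩ := hpq (max (i₁ + 1) K)
  simp only [Prod.mk.injEq] at hi₁ hi₂pq
  refine ⟨p, q, c, w, ρ, σ, i₁, i₂, hρ, hσ, by omega, hi₁.1, hi₂pq.1, hi₁.2, hi₂pq.2,
    fun k hk _ => hc k (by omega), fun e he hed => ?_⟩
  obtain ⟨k, hk₁, hk₂, hk⟩ := hK e (Finset.mem_erase.2 ⟨hed, he⟩)
  exact ⟨k, hk₁, by omega, hk⟩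

theorem ColourWitness.eq (hMacc : M.acc = genBuchi C) (hMdet : M.Deterministic)
    {S : Finset D} (hS : (restrictColours B S).Lang = M.Lang) {d₁ d₂ : D} {p : B.Q} {q : M.Q}
    {c : C} (h₁ : ColourWitness M B S d₁ p q c) (h₂ : ColourWitness M B S d₂ p q c) :
    d₁ = d₂ := by
  obtain ⟨w₁, ρ₁, σ₁, i₁, i₂, hρ₁, hσ₁, hi, hp₁, hp₂, hq₁, hq₂, hc₁, hS₁⟩ := h₁
  obtain ⟨w₂, ρ₂, σ₂, i₁', i₂', hρ₂, hσ₂, hi', hp₁', hp₂', hq₁', hq₂', hc₂, hS₂⟩ := h₂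
  by_contra hne
  have hw : splice w₁ w₂ i₁ i₂ i₁' i₂' ∈ M.Lang := by
    rw [← hS, mem_lang_restrictColours]
    refine ⟨_, hρ₁.splice hρ₂ hi hi' hp₁ hp₂ hp₁' hp₂', fun e he n => ?_⟩
    by_cases hed : e = d₁
    · obtain ⟨k, hk₁, hk₂, hk⟩ := hS₂ e he fun h => hne (hed.symm.trans h)
      obtain ⟨m, hm, hmk⟩ := frequently_splice_eq_right ρ₁ ρ₂ (i₁ := i₁) (i₂ := i₂) hk₁ hk₂ n
      exact ⟨m, hm, hmk ▸ hk⟩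
    · obtain ⟨k, hk₁, hk₂, hk⟩ := hS₁ e he hed
      obtain ⟨m, hm, hmk⟩ := frequently_splice_eq_left ρ₁ ρ₂ (i₁' := i₁') (i₂' := i₂') hk₁ hk₂ n
      exact ⟨m, hm, hmk ▸ hk⟩
  obtain ⟨τ, hτ, hτacc⟩ := hw
  rw [hMacc, hτ.eq hMdet (hσ₁.splice hσ₂ hi hi' hq₁ hq₂ hq₁' hq₂')] at hτacc
  obtain ⟨m, hm, hcm⟩ := hτacc c i₁
  rcases splice_eq_left_or_right σ₁ σ₂ hi hm with ⟨k, hk₁, hk₂, hk⟩ | ⟨k, hk₁, hk₂, hk⟩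
  · exact hc₁ k hk₁ hk₂ (hk ▸ hcm)
  · exact hc₂ k hk₁ hk₂ (hk ▸ hcm)

theorem exists_restrictColours_card_le [Fintype C] [Fintype D] (hMacc : M.acc = genBuchi C)
    (hMdet : M.Deterministic) (hBacc : B.acc = genBuchi D) (hL : B.Lang = M.Lang)
    (htrim : ∀ q, (B.LangFrom q).Nonempty) :
    ∃ S : Finset D, S.card ≤ B.size * M.size * Fintype.card C ∧
      (restrictColours B S).Lang = M.Lang := by
  classical
  obtain ⟨S, hS⟩ := exists_minimal_of_wellFoundedLT
    (fun S : Finset D => (restrictColours B S).Lang = M.Lang)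
    ⟨Finset.univ, (lang_restrictColours_univ hBacc).trans hL⟩
  refine ⟨S, ?_, hS.prop⟩
  choose p q c hpqc using fun d : S => exists_colourWitness hMacc hMdet hBacc hL htrim hS.prop
    (hS.not_prop_of_lt (Finset.erase_ssubset d.2))
  let _ := B.fin
  let _ := M.fin
  have hinj : Function.Injective fun d : S => ((p d, q d), c d) := by
    intro d₁ d₂ h
    simp only [Prod.mk.injEq] at h
    obtain ⟨⟨hp, hq⟩, hc⟩ := h
    have h₂ := hpqc d₂
    rw [← hp, ← hq, ← hc] at h₂
    exact Subtype.ext (ColourWitness.eq hMacc hMdet hS.prop (hpqc d₁) h₂)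
  calc S.card = Fintype.card S := (Fintype.card_coe S).symm
    _ ≤ Fintype.card ((B.Q × M.Q) × C) := Fintype.card_le_of_injective _ hinj
    _ = B.size * M.size * Fintype.card C := by simp [Fintype.card_prod, size]

end ColourReduction

variable {A : Type}

theorem exists_minimal_trim {C : Type} [Fintype C] (M : Automaton A (Set C))
    (hacc : M.acc = genBuchi C) (hdet : M.Deterministic) (hL : M.Lang.Nonempty) :
    ∃ (D : Type) (_ : Fintype D) (B : Automaton A (Set D)),
      B.acc = genBuchi D ∧ B.Deterministic ∧ B.Lang = M.Lang ∧ (∀ q, (B.LangFrom q).Nonempty) ∧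
      ∀ (C' : Type) (_ : Fintype C') (B' : Automaton A (Set C')),
        B'.acc = genBuchi C' → B'.Deterministic → B'.Lang = M.Lang → B.size ≤ B'.size := by
  classical
  have hex : ∃ s, ∃ (D : Type) (_ : Fintype D) (B : Automaton A (Set D)),
      B.acc = genBuchi D ∧ B.Deterministic ∧ B.Lang = M.Lang ∧ B.size = s :=
    ⟨_, C, inferInstance, M, hacc, hdet, rfl, rfl⟩
  obtain ⟨D, iD, B, hBacc, hBdet, hBL, hBsize⟩ := Nat.find_spec hex
  have hB : B.Lang.Nonempty := hBL ▸ hL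
  refine ⟨D, iD, B.trim hB, hBacc, trim_deterministic hBdet, (lang_trim hBacc).trans hBL,
    langFrom_trim_nonempty hBacc, fun C' iC' B' hacc' hdet' hL' => ?_⟩
  calc (B.trim hB).size ≤ B.size := trim_size_le
    _ = Nat.find hex := hBsize
    _ ≤ B'.size := Nat.find_min' hex ⟨C', iC', B', hacc', hdet', hL', rfl⟩

variable (A) in
def rejectAll : Automaton A (Set PEmpty) where
  Q := Unit
  fin := inferInstance
  init := ()
  delta := ∅
  acc := genBuchi PEmpty

theorem rejectAll_deterministic : (rejectAll A).Deterministic :=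
  fun _ ht => absurd ht (Set.notMem_empty _)

theorem lang_rejectAll : (rejectAll A).Lang = ∅ :=
  Set.eq_empty_of_forall_notMem fun _ ⟨_, hρ, _⟩ => absurd (hρ.2 0).1 (Set.notMem_empty _)

theorem size_rejectAll : (rejectAll A).size = 1 :=
  rfl

end Automaton

/-- every deterministic generalised Büchi automaton with `n`
states and `k` colours has an equivalent deterministic generalised Büchi
automaton with a minimal number of states using at most `n² · k` colours. -/
theorem stmt_17 {A C : Type} [Fintype C] (M : Automaton A (Set C))
    (hacc : M.acc = genBuchi C) (hdet : M.Deterministic) :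
    ∃ (C' : Type) (iC : Fintype C') (B : Automaton A (Set C')),
      B.acc = genBuchi C' ∧ B.Deterministic ∧ B.Lang = M.Lang ∧
      @Fintype.card C' iC ≤ M.size ^ 2 * Fintype.card C ∧
      (∀ (C'' : Type) (_ : Fintype C'') (B' : Automaton A (Set C'')),
        B'.acc = genBuchi C'' → B'.Deterministic → B'.Lang = M.Lang →
        B.size ≤ B'.size) := by
  rcases M.Lang.eq_empty_or_nonempty with hL | hL
  · refine ⟨PEmpty, inferInstance, Automaton.rejectAll A, rfl, Automaton.rejectAll_deterministic,
      Automaton.lang_rejectAll.trans hL.symm, by simp, fun _ _ B' _ _ _ => ?_⟩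
    rw [Automaton.size_rejectAll]
    exact B'.size_pos
  obtain ⟨D, _, B, hBacc, hBdet, hBL, hBtrim, hBmin⟩ := Automaton.exists_minimal_trim M hacc hdet hL
  obtain ⟨S, hScard, hSL⟩ := Automaton.exists_restrictColours_card_le hacc hdet hBacc hBL hBtrim
  refine ⟨S, inferInstance, Automaton.restrictColours B S, rfl,
    Automaton.recolor_deterministic hBdet, hSL, ?_, hBmin⟩
  calc Fintype.card S = S.card := Fintype.card_coe S
    _ ≤ B.size * M.size * Fintype.card C := hScard
    _ ≤ M.size * M.size * Fintype.card C := by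
      gcongr
      exact hBmin C inferInstance M hacc hdet rfl
    _ = M.size ^ 2 * Fintype.card C := by ring
end
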